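/- arXiv:1804.08880 — 15 statements merged into one kernel-verified Lean document; each statement's English description precedes it below -/
import Mathlib

section
/- Let A be a nonempty closed convex subset of X and B a nonempty finite subset of X with A ∩ B = ∅. Then no Douglas–Rachford sequence with respect to (A, B) converges; i.e., there is no x ∈ X with x_n → x. -/
open Filter

/-- If `A` is a nonempty closed convex subset and `B` a nonempty finite
subset of a finite-dimensional real inner product space `X` with `A ∩ B = ∅`, then no
Douglas–Rachford sequence with respect to `(A, B)` converges. -/
theorem dr_hyperplane_doubleton_stmt_0
    {X : Type*} [NormedAddCommGroup X] [InnerProductSpace ℝ X] [FiniteDimensional ℝ X]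
    (A B : Set X) (hA : A.Nonempty) (hAclosed : IsClosed A) (hAconv : Convex ℝ A)
    (hB : B.Nonempty) (hBfin : B.Finite) (hAB : A ∩ B = ∅)
    (P : X → X) (hP : ∀ y : X, P y ∈ A ∧ ∀ a ∈ A, ‖y - P y‖ ≤ ‖y - a‖)
    (x : ℕ → X)
    (hx : ∀ n : ℕ, ∃ b ∈ B,
      (∀ b' ∈ B, ‖((2 : ℝ) • P (x n) - x n) - b‖ ≤ ‖((2 : ℝ) • P (x n) - x n) - b'‖) ∧
      x (n + 1) = x n - P (x n) + b) :
    ¬ ∃ l : X, Tendsto x atTop (nhds l) := by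
  rintro ⟨l, hl⟩
  choose b hbB _ hrec using hx
  -- the steps tend to 0
  have hstep : Tendsto (fun n => x (n + 1) - x n) atTop (nhds 0) := by
    have h1 : Tendsto (fun n => x (n + 1)) atTop (nhds l) :=
      hl.comp (tendsto_add_atTop_nat 1)
    simpa using h1.sub hl
  -- distance from each point of B to A is positive
  have hpos : ∀ c ∈ B, 0 < Metric.infDist c A := by
    intro c hc
    rw [← hAclosed.notMem_iff_infDist_pos hA]
    intro hcA
    have : c ∈ A ∩ B := ⟨hcA, hc⟩
    simp [hAB] at this
  obtain ⟨s, hs⟩ := hBfin.exists_finset_coe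
  have hsne : s.Nonempty := by
    rw [← Finset.coe_nonempty, hs]; exact hB
  set δ : ℝ := s.inf' hsne (fun c => Metric.infDist c A) with hδ
  have hδpos : 0 < δ := by
    rw [hδ, Finset.lt_inf'_iff]
    intro c hc
    exact hpos c (by rw [← hs]; exact hc)
  -- each step has norm at least δ
  have hlow : ∀ n, δ ≤ ‖x (n + 1) - x n‖ := by
    intro n
    have heq : x (n + 1) - x n = b n - P (x n) := by rw [hrec n]; abel
    rw [heq]
    have h1 : δ ≤ Metric.infDist (b n) A :=
      Finset.inf'_le _ (by rw [← Finset.mem_coe, hs]; exact hbB n)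
    have h2 : Metric.infDist (b n) A ≤ dist (b n) (P (x n)) :=
      Metric.infDist_le_dist_of_mem (hP (x n)).1
    rw [dist_eq_norm] at h2
    linarith
  have := hstep.norm
  rw [norm_zero] at this
  have hlt : ∀ᶠ n in atTop, ‖x (n + 1) - x n‖ < δ :=
    this.eventually (eventually_lt_nhds hδpos)
  obtain ⟨n, hn⟩ := hlt.exists
  exact absurd (hlow n) (not_le.mpr hn)
end

section
/- Suppose B is contained in one of the two closed halfspaces induced by A, i.e., either ⟨b, u⟩ ≤ 0 for all b ∈ B or ⟨b, u⟩ ≥ 0 for all b ∈ B. Then either (a) the DR sequence (x_n) converges finitely, i.e., there is n_0 with x_n = x_{n_0} for all n ≥ n_0, and P_A x_{n_0} ∈ A ∩ B; or (b) A ∩ B = ∅ and ‖x_n‖ → +∞, in which case (P_A x_n) converges finitely to a point a ∈ A with d_B(a) = min_{a' ∈ A} d_B(a'), where d_B(x) := min_{b ∈ B} ‖x − b‖. -/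
open Filter
open scoped RealInnerProductSpace

private lemma dr_pyth {X : Type*} [NormedAddCommGroup X] [InnerProductSpace ℝ X]
    {u : X} (hu : ‖u‖ = 1) (v : X) (hv : ⟪v, u⟫ = 0) (s : ℝ) :
    ‖v - s • u‖ ^ 2 = ‖v‖ ^ 2 + s ^ 2 := by
  rw [norm_sub_sq_real, real_inner_smul_right, hv, norm_smul, hu]
  simp [mul_pow, sq_abs]

private lemma dr_main {X : Type*} [NormedAddCommGroup X] [InnerProductSpace ℝ X]
    (u : X) (hu : ‖u‖ = 1)
    (B : Set X) (hB : B.Nonempty) (hBfin : B.Finite)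
    (hpos : ∀ b ∈ B, 0 ≤ ⟪b, u⟫)
    (x : ℕ → X)
    (hx : ∀ n : ℕ, ∃ b ∈ B,
      (∀ b' ∈ B, ‖(x n - (2 * ⟪x n, u⟫) • u) - b‖ ≤ ‖(x n - (2 * ⟪x n, u⟫) • u) - b'‖) ∧
      x (n + 1) = ⟪x n, u⟫ • u + b) :
    (∃ n₀ : ℕ, (∀ n : ℕ, n₀ ≤ n → x n = x n₀) ∧
        (x n₀ - ⟪x n₀, u⟫ • u) ∈ {y : X | ⟪y, u⟫ = 0} ∩ B) ∨
    ({y : X | ⟪y, u⟫ = 0} ∩ B = ∅ ∧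
        Tendsto (fun n : ℕ => ‖x n‖) atTop atTop ∧
        ∃ a : X, ⟪a, u⟫ = 0 ∧
          (∃ n₀ : ℕ, ∀ n : ℕ, n₀ ≤ n → x n - ⟪x n, u⟫ • u = a) ∧
          ∀ a' : X, ⟪a', u⟫ = 0 → Metric.infDist a B ≤ Metric.infDist a' B) := by
  choose b hbB hmin hrec using hx
  have huu : ⟪u, u⟫ = 1 := by
    rw [real_inner_self_eq_norm_mul_norm, hu]; norm_num
  have hPu : ∀ y : X, ⟪y - ⟪y, u⟫ • u, u⟫ = 0 := by
    intro y; rw [inner_sub_left, real_inner_smul_left, huu]; ring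
  -- distance formula
  have hdist : ∀ (n : ℕ) (c : X),
      ‖(x n - (2 * ⟪x n, u⟫) • u) - c‖ ^ 2 =
        ‖(x n - ⟪x n, u⟫ • u) - (c - ⟪c, u⟫ • u)‖ ^ 2 + (⟪x n, u⟫ + ⟪c, u⟫) ^ 2 := by
    intro n c
    have hv : ⟪(x n - ⟪x n, u⟫ • u) - (c - ⟪c, u⟫ • u), u⟫ = 0 := by
      rw [inner_sub_left, hPu, hPu]; ring
    have heq : (x n - (2 * ⟪x n, u⟫) • u) - c =
        ((x n - ⟪x n, u⟫ • u) - (c - ⟪c, u⟫ • u)) - (⟪x n, u⟫ + ⟪c, u⟫) • u := by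
      module
    rw [heq, dr_pyth hu _ hv]
  have hmin2 : ∀ n, ∀ c ∈ B,
      ‖(x n - ⟪x n, u⟫ • u) - (b n - ⟪b n, u⟫ • u)‖ ^ 2 + (⟪x n, u⟫ + ⟪b n, u⟫) ^ 2 ≤
      ‖(x n - ⟪x n, u⟫ • u) - (c - ⟪c, u⟫ • u)‖ ^ 2 + (⟪x n, u⟫ + ⟪c, u⟫) ^ 2 := by
    intro n c hc
    have h2 := pow_le_pow_left₀ (norm_nonneg _) (hmin n c hc) 2
    rwa [hdist, hdist] at h2
  have ht : ∀ n, ⟪x (n + 1), u⟫ = ⟪x n, u⟫ + ⟪b n, u⟫ := by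
    intro n
    rw [hrec n, inner_add_left, real_inner_smul_left, huu]; ring
  have hPx : ∀ n, x (n + 1) - ⟪x (n + 1), u⟫ • u = b n - ⟪b n, u⟫ • u := by
    intro n
    rw [hrec n, inner_add_left, real_inner_smul_left, huu]
    module
  have hmono : Monotone fun n => ⟪x n, u⟫ := by
    refine monotone_nat_of_le_succ fun n => ?_
    have := hpos (b n) (hbB n)
    rw [ht n]; linarith
  -- finite set machinery
  set S : Finset X := hBfin.toFinset with hSdef
  have hSB : ∀ {y : X}, y ∈ S ↔ y ∈ B := fun {y} => hBfin.mem_toFinset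
  have hSne : S.Nonempty := ⟨hB.choose, hSB.mpr hB.choose_spec⟩
  set K : ℝ := (S ×ˢ S).sup' (hSne.product hSne)
      (fun p => ‖(p.1 - ⟪p.1, u⟫ • u) - (p.2 - ⟪p.2, u⟫ • u)‖ ^ 2) with hKdef
  have hK : ∀ b₁ ∈ B, ∀ b₂ ∈ B,
      ‖(b₁ - ⟪b₁, u⟫ • u) - (b₂ - ⟪b₂, u⟫ • u)‖ ^ 2 ≤ K := by
    intro b₁ h₁ b₂ h₂
    exact Finset.le_sup' (f := fun p : X × X => ‖(p.1 - ⟪p.1, u⟫ • u) - (p.2 - ⟪p.2, u⟫ • u)‖ ^ 2)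
      (show (b₁, b₂) ∈ S ×ˢ S from Finset.mem_product.mpr ⟨hSB.mpr h₁, hSB.mpr h₂⟩)
  set βmin : ℝ := (S.image fun y => ⟪y, u⟫).min' (hSne.image _) with hβdef
  have hβle : ∀ c ∈ B, βmin ≤ ⟪c, u⟫ := fun c hc =>
    Finset.min'_le _ _ (Finset.mem_image_of_mem _ (hSB.mpr hc))
  obtain ⟨bs, hbsS, hbsmin⟩ :=
    Finset.mem_image.mp (Finset.min'_mem (S.image fun y => ⟪y, u⟫) (hSne.image _))
  have hbsB : bs ∈ B := hSB.mp hbsS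
  have hbsmin' : ⟪bs, u⟫ = βmin := by rw [hβdef, hbsmin]
  have hβnn : 0 ≤ βmin := hbsmin' ▸ hpos bs hbsB
  -- key inequality
  have hL1 : ∀ n, ∀ c ∈ B,
      (⟪x (n + 1), u⟫ + ⟪b (n + 1), u⟫) ^ 2 ≤ K + (⟪x (n + 1), u⟫ + ⟪c, u⟫) ^ 2 := by
    intro n c hc
    have h := hmin2 (n + 1) c hc
    rw [hPx n] at h
    have h1 := hK (b n) (hbB n) c hc
    have h2 := sq_nonneg ‖(b n - ⟪b n, u⟫ • u) - (b (n + 1) - ⟪b (n + 1), u⟫ • u)‖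
    linarith
  by_cases h0 : ∀ᶠ n in atTop, ⟪b n, u⟫ = 0
  · -- case (a)
    left
    obtain ⟨N, hN⟩ := eventually_atTop.mp h0
    have hbconst : ∀ n, N ≤ n → b (n + 1) = b n := by
      intro n hn
      have h := hmin2 (n + 1) (b n) (hbB n)
      rw [hPx n, hN n hn, hN (n + 1) (le_trans hn (Nat.le_succ n))] at h
      simp only [zero_smul, sub_zero, sub_self, norm_zero, add_zero] at h
      have h2 : ‖b n - b (n + 1)‖ = 0 := by
        nlinarith [norm_nonneg (b n - b (n + 1))]
      exact (sub_eq_zero.mp (norm_eq_zero.mp h2)).symm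
    have hxconst : ∀ n, N + 1 ≤ n → x n = x (N + 1) := by
      intro n hn
      induction n, hn using Nat.le_induction with
      | base => rfl
      | succ m hm ih =>
        obtain ⟨m', rfl⟩ : ∃ m', m = m' + 1 := ⟨m - 1, by omega⟩
        have h1 : ⟪x (m' + 1), u⟫ = ⟪x m', u⟫ := by
          rw [ht m', hN m' (by omega), add_zero]
        have hstep : x (m' + 1 + 1) = x (m' + 1) := by
          rw [hrec (m' + 1), h1, hbconst m' (by omega), ← hrec m']
        rw [hstep]; exact ih
    refine ⟨N + 1, fun n hn => hxconst n hn, ?_⟩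
    rw [hPx N]
    refine ⟨hPu (b N), ?_⟩
    have h5 : ⟪b N, u⟫ = 0 := hN N le_rfl
    rw [h5]
    simpa using hbB N
  · -- case (b)
    right
    have hfreq : ∃ᶠ n in atTop, ⟪b n, u⟫ ≠ 0 := not_eventually.mp h0
    -- positive minimum increment
    set Sp : Finset X := S.filter (fun y => 0 < ⟪y, u⟫) with hSpdef
    have hSpne : Sp.Nonempty := by
      obtain ⟨n, hn⟩ := hfreq.exists
      exact ⟨b n, Finset.mem_filter.mpr ⟨hSB.mpr (hbB n),
        lt_of_le_of_ne (hpos _ (hbB n)) (Ne.symm hn)⟩⟩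
    set δ : ℝ := (Sp.image fun y => ⟪y, u⟫).min' (hSpne.image _) with hδdef
    have hδpos : 0 < δ := by
      obtain ⟨y, hy, hyδ⟩ := Finset.mem_image.mp (Finset.min'_mem _ (hSpne.image (fun y => ⟪y, u⟫)))
      rw [hδdef, ← hyδ]
      exact (Finset.mem_filter.mp hy).2
    have hδle : ∀ c ∈ B, 0 < ⟪c, u⟫ → δ ≤ ⟪c, u⟫ := fun c hc hc' =>
      Finset.min'_le _ _ (Finset.mem_image_of_mem _ (Finset.mem_filter.mpr ⟨hSB.mpr hc, hc'⟩))
    -- t tends to infinity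
    have hsteps : ∀ k : ℕ, ∃ n, ⟪x 0, u⟫ + k * δ ≤ ⟪x n, u⟫ := by
      intro k
      induction k with
      | zero => exact ⟨0, by simp⟩
      | succ k ih =>
        obtain ⟨n, hn⟩ := ih
        obtain ⟨m, hmn, hm⟩ := (frequently_atTop.mp hfreq) n
        have hm' : δ ≤ ⟪b m, u⟫ :=
          hδle _ (hbB m) (lt_of_le_of_ne (hpos _ (hbB m)) (Ne.symm hm))
        refine ⟨m + 1, ?_⟩
        have h5 : ⟪x n, u⟫ ≤ ⟪x m, u⟫ := hmono hmn
        rw [ht m]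
        push_cast
        linarith
    have htt : Tendsto (fun n => ⟪x n, u⟫) atTop atTop := by
      refine tendsto_atTop_atTop_of_monotone hmono fun M => ?_
      obtain ⟨k, hk⟩ := exists_nat_ge ((M - ⟪x 0, u⟫) / δ)
      obtain ⟨n, hn⟩ := hsteps k
      refine ⟨n, ?_⟩
      have : M - ⟪x 0, u⟫ ≤ k * δ := by
        rw [div_le_iff₀ hδpos] at hk
        linarith
      linarith
    have hnorm : Tendsto (fun n : ℕ => ‖x n‖) atTop atTop := by
      refine tendsto_atTop_mono (fun n => ?_) htt
      calc ⟪x n, u⟫ ≤ ‖x n‖ * ‖u‖ := real_inner_le_norm _ _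
        _ = ‖x n‖ := by rw [hu, mul_one]
    -- eventually chosen b has minimal inner product
    have hev : ∀ᶠ n in atTop, ⟪b n, u⟫ = βmin := by
      have hall : ∀ c ∈ B, ∀ᶠ n in atTop, (βmin < ⟪c, u⟫ → b n ≠ c) := by
        intro c hc
        by_cases hcm : βmin < ⟪c, u⟫
        · have htt2 : Tendsto
              (fun n => (⟪c, u⟫ - βmin) * (2 * ⟪x n, u⟫ + ⟪c, u⟫ + βmin)) atTop atTop := by
            apply Tendsto.const_mul_atTop (by linarith)
            apply tendsto_atTop_add_const_right
            apply tendsto_atTop_add_const_right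
            exact (tendsto_const_mul_atTop_of_pos (by norm_num : (0:ℝ) < 2)).mpr htt
          filter_upwards [htt2.eventually_gt_atTop K, eventually_ge_atTop 1]
            with n hn hn1 _ hbc
          obtain ⟨m, rfl⟩ : ∃ m, n = m + 1 := ⟨n - 1, by omega⟩
          have h := hL1 m bs hbsB
          rw [hbc, hbsmin] at h
          nlinarith
        · filter_upwards with n h; exact absurd h hcm
      have := (eventually_all_finite hBfin).mpr hall
      filter_upwards [this] with n hn
      have := hβle (b n) (hbB n)
      rcases eq_or_lt_of_le this with h | h
      · exact h.symm
      · exact absurd rfl (hn (b n) (hbB n) h)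
    obtain ⟨N, hN⟩ := eventually_atTop.mp hev
    -- βmin is positive
    have hβpos : 0 < βmin := by
      rcases lt_or_eq_of_le hβnn with h | h
      · exact h
      · exfalso
        apply h0
        filter_upwards [hev] with n hn
        rw [hn, ← h]
    -- projections stabilize
    have hPbconst : ∀ n, N ≤ n → b (n + 1) - ⟪b (n + 1), u⟫ • u = b n - ⟪b n, u⟫ • u := by
      intro n hn
      have h := hmin2 (n + 1) (b n) (hbB n)
      rw [hPx n, hN n hn, hN (n + 1) (le_trans hn (Nat.le_succ n))] at h
      simp only [sub_self, norm_zero] at h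
      have h2 : ‖b n - βmin • u - (b (n + 1) - βmin • u)‖ = 0 := by
        nlinarith [norm_nonneg (b n - βmin • u - (b (n + 1) - βmin • u))]
      have h4 := sub_eq_zero.mp (norm_eq_zero.mp h2)
      rw [hN n hn, hN (n + 1) (le_trans hn (Nat.le_succ n))]
      exact h4.symm
    have hPbN : ∀ n, N ≤ n → b n - ⟪b n, u⟫ • u = b N - ⟪b N, u⟫ • u := by
      intro n hn
      induction n, hn using Nat.le_induction with
      | base => rfl
      | succ m hm ih => rw [hPbconst m hm, ih]
    refine ⟨?_, hnorm, b N - ⟪b N, u⟫ • u, hPu (b N), ⟨N + 1, ?_⟩, ?_⟩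
    · -- A ∩ B = ∅
      ext y
      simp only [Set.mem_inter_iff, Set.mem_setOf_eq, Set.mem_empty_iff_false, iff_false,
        not_and]
      intro hy hyB
      have := hβle y hyB
      rw [hy] at this
      linarith
    · -- projections of x stabilize
      intro n hn
      obtain ⟨m, rfl⟩ : ∃ m, n = m + 1 := ⟨n - 1, by omega⟩
      rw [hPx m, hPbN m (by omega)]
    · -- optimality
      intro a' ha'
      have h1 : Metric.infDist (b N - ⟪b N, u⟫ • u) B ≤ βmin := by
        have h2 := Metric.infDist_le_dist_of_mem (x := b N - ⟪b N, u⟫ • u) (hbB N)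
        rw [dist_eq_norm] at h2
        have h3 : b N - ⟪b N, u⟫ • u - b N = -(⟪b N, u⟫ • u) := by module
        rw [h3, norm_neg, norm_smul, hu, mul_one, hN N le_rfl, Real.norm_eq_abs,
          abs_of_nonneg hβnn] at h2
        rw [hN N le_rfl]
        exact h2
      have h2 : βmin ≤ Metric.infDist a' B := by
        by_contra hcon
        push_neg at hcon
        obtain ⟨c, hcB, hcd⟩ := (Metric.infDist_lt_iff hB).mp hcon
        have h3 : ⟪c - a', u⟫ ≤ ‖c - a'‖ * ‖u‖ := real_inner_le_norm _ _
        rw [hu, mul_one, inner_sub_left, ha', sub_zero] at h3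
        have h4 := hβle c hcB
        rw [dist_comm, dist_eq_norm] at hcd
        linarith
      linarith

/-- If `B` is contained in one of the two closed halfspaces induced by the
hyperplane `A = {u}ᗮ`, then either (a) the DR sequence converges finitely to a point whose
projection onto `A` lies in `A ∩ B`, or (b) `A ∩ B = ∅`, `‖x n‖ → ∞`, and the projections
`P_A (x n)` converge finitely to a best approximation point `a ∈ A` relative to `A` and `B`. -/
theorem dr_hyperplane_doubleton_stmt_2
    {X : Type*} [NormedAddCommGroup X] [InnerProductSpace ℝ X] [FiniteDimensional ℝ X]
    (u : X) (hu : ‖u‖ = 1)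
    (B : Set X) (hB : B.Nonempty) (hBfin : B.Finite)
    (hhalf : (∀ b ∈ B, ⟪b, u⟫ ≤ 0) ∨ (∀ b ∈ B, 0 ≤ ⟪b, u⟫))
    (x : ℕ → X)
    (hx : ∀ n : ℕ, ∃ b ∈ B,
      (∀ b' ∈ B, ‖(x n - (2 * ⟪x n, u⟫) • u) - b‖ ≤ ‖(x n - (2 * ⟪x n, u⟫) • u) - b'‖) ∧
      x (n + 1) = ⟪x n, u⟫ • u + b) :
    (∃ n₀ : ℕ, (∀ n : ℕ, n₀ ≤ n → x n = x n₀) ∧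
        (x n₀ - ⟪x n₀, u⟫ • u) ∈ {y : X | ⟪y, u⟫ = 0} ∩ B) ∨
    ({y : X | ⟪y, u⟫ = 0} ∩ B = ∅ ∧
        Tendsto (fun n : ℕ => ‖x n‖) atTop atTop ∧
        ∃ a : X, ⟪a, u⟫ = 0 ∧
          (∃ n₀ : ℕ, ∀ n : ℕ, n₀ ≤ n → x n - ⟪x n, u⟫ • u = a) ∧
          ∀ a' : X, ⟪a', u⟫ = 0 → Metric.infDist a B ≤ Metric.infDist a' B) := by
  rcases hhalf with hneg | hpos
  · have hu' : ‖-u‖ = 1 := by rwa [norm_neg]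
    have hpos' : ∀ b ∈ B, 0 ≤ ⟪b, -u⟫ := by
      intro c hc
      rw [inner_neg_right]
      linarith [hneg c hc]
    have hx' : ∀ n : ℕ, ∃ b ∈ B,
        (∀ b' ∈ B, ‖(x n - (2 * ⟪x n, -u⟫) • (-u)) - b‖ ≤
          ‖(x n - (2 * ⟪x n, -u⟫) • (-u)) - b'‖) ∧
        x (n + 1) = ⟪x n, -u⟫ • (-u) + b := by
      intro n
      obtain ⟨c, hcB, h1, h2⟩ := hx n
      exact ⟨c, hcB, by simpa [inner_neg_right, smul_neg, neg_smul] using h1,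
        by simpa [inner_neg_right, smul_neg, neg_smul] using h2⟩
    have := dr_main (-u) hu' B hB hBfin hpos' x hx'
    simpa [inner_neg_right, smul_neg, neg_smul, neg_eq_zero] using this
  · exact dr_main u hu B hB hBfin hpos x hx
end

section
/- Suppose B is not contained in one of the two closed halfspaces induced by A, i.e., there exist b, b' ∈ B with ⟨b, u⟩ < 0 < ⟨b', u⟩. Then every DR sequence (x_n)_{n∈ℕ} with respect to (A, B) is bounded. -/
open scoped RealInnerProductSpace

/-!
Write `t n = ⟪x n, u⟫` and `v n = x n - t n • u` for the components of `x n` along `u` and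
in `A`. A DR step replaces `v` by `P_A b` and adds `⟪b, u⟫` to `t`, so the `v n` stay bounded
and `t` moves by bounded steps. Since `‖R_A x - b‖² = ‖v - P_A b‖² + (t + ⟪b, u⟫)²`, once `t`
is large the nearest point `b` must have `⟪b, u⟫ < 0`: any `b` with `⟪b, u⟫ ≥ 0` is farther than
a point of `B` on the negative side. Hence `t` decreases above a threshold and, by the
symmetry `u ↦ -u`, increases below its negative.
-/

section DouglasRachford

variable {X : Type*} [NormedAddCommGroup X] [InnerProductSpace ℝ X]

/-- One DR step `x ↦ y` with respect to `({u}ᗮ, B)`; here `R_A x = x - (2 * ⟪x, u⟫) • u`. -/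
def IsDRStep (u : X) (B : Set X) (x y : X) : Prop :=
  ∃ b ∈ B, (∀ b' ∈ B, ‖(x - (2 * ⟪x, u⟫) • u) - b‖ ≤ ‖(x - (2 * ⟪x, u⟫) • u) - b'‖) ∧
    y = ⟪x, u⟫ • u + b

lemma isDRStep_neg {u : X} {B : Set X} {x y : X} : IsDRStep (-u) B x y ↔ IsDRStep u B x y := by
  simp only [IsDRStep, inner_neg_right, mul_neg, neg_smul_neg]

section UnitVector

variable {u : X} (hu : ‖u‖ = 1)
include hu

lemma norm_sq_eq_norm_sub_inner_smul_sq_add (w : X) :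
    ‖w‖ ^ 2 = ‖w - ⟪w, u⟫ • u‖ ^ 2 + ⟪w, u⟫ ^ 2 := by
  have horth : ⟪w - ⟪w, u⟫ • u, ⟪w, u⟫ • u⟫ = 0 := by
    rw [inner_smul_right, inner_sub_left, real_inner_smul_left,
      inner_self_eq_one_of_norm_eq_one hu]
    ring
  have h := norm_add_sq_eq_norm_sq_add_norm_sq_real horth
  rw [sub_add_cancel, norm_smul, hu, mul_one, Real.norm_eq_abs] at h
  linear_combination h + abs_mul_abs_self ⟪w, u⟫

lemma norm_sub_inner_smul_le (w : X) : ‖w - ⟪w, u⟫ • u‖ ≤ ‖w‖ := by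
  have := norm_sq_eq_norm_sub_inner_smul_sq_add hu w
  exact pow_le_pow_iff_left₀ (norm_nonneg _) (norm_nonneg _) two_ne_zero |>.1
    (by nlinarith [sq_nonneg ⟪w, u⟫])

lemma inner_inner_smul_add (x b : X) : ⟪⟪x, u⟫ • u + b, u⟫ = ⟪x, u⟫ + ⟪b, u⟫ := by
  rw [inner_add_left, real_inner_smul_left, inner_self_eq_one_of_norm_eq_one hu, mul_one]

lemma inner_smul_add_sub_inner_smul (x b : X) :
    (⟪x, u⟫ • u + b) - ⟪⟪x, u⟫ • u + b, u⟫ • u = b - ⟪b, u⟫ • u := by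
  rw [inner_inner_smul_add hu]
  module

lemma norm_reflect_sub_sq (x b : X) :
    ‖(x - (2 * ⟪x, u⟫) • u) - b‖ ^ 2 =
      ‖(x - ⟪x, u⟫ • u) - (b - ⟪b, u⟫ • u)‖ ^ 2 + (⟪x, u⟫ + ⟪b, u⟫) ^ 2 := by
  have hcomp : ⟪(x - (2 * ⟪x, u⟫) • u) - b, u⟫ = -(⟪x, u⟫ + ⟪b, u⟫) := by
    rw [inner_sub_left, inner_sub_left, real_inner_smul_left, inner_self_eq_one_of_norm_eq_one hu]
    ring
  have htan : ((x - (2 * ⟪x, u⟫) • u) - b) - ⟪(x - (2 * ⟪x, u⟫) • u) - b, u⟫ • u =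
      (x - ⟪x, u⟫ • u) - (b - ⟪b, u⟫ • u) := by
    rw [hcomp]
    module
  rw [norm_sq_eq_norm_sub_inner_smul_sq_add hu, htan, hcomp, neg_sq]

lemma IsDRStep.inner_lt {B : Set X} {x y bm : X} (hstep : IsDRStep u B x y) (hbm : bm ∈ B)
    (hbmu : ⟪bm, u⟫ < 0) {D : ℝ} (hD : ‖(x - ⟪x, u⟫ • u) - (bm - ⟪bm, u⟫ • u)‖ ≤ D)
    (hlarge : D ^ 2 + ⟪bm, u⟫ ^ 2 < 2 * ⟪x, u⟫ * -⟪bm, u⟫) :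
    ⟪y, u⟫ < ⟪x, u⟫ := by
  obtain ⟨b, -, hmin, rfl⟩ := hstep
  rw [inner_inner_smul_add hu]
  by_contra! hbu
  have hnear : (⟪x, u⟫ + ⟪b, u⟫) ^ 2 ≤ D ^ 2 + (⟪x, u⟫ + ⟪bm, u⟫) ^ 2 := by
    have hsq := pow_le_pow_left₀ (norm_nonneg _) (hmin bm hbm) 2
    have hD2 := pow_le_pow_left₀ (norm_nonneg _) hD 2
    rw [norm_reflect_sub_sq hu, norm_reflect_sub_sq hu] at hsq
    nlinarith [sq_nonneg ‖(x - ⟪x, u⟫ • u) - (b - ⟪b, u⟫ • u)‖]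
  have hpos : 0 < ⟪x, u⟫ := by nlinarith [sq_nonneg D, sq_nonneg ⟪bm, u⟫]
  nlinarith

end UnitVector

lemma le_max_of_step_le_of_decreasing_above {t : ℕ → ℝ} {K T : ℝ}
    (hstep : ∀ n, t (n + 1) ≤ t n + K) (hdown : ∀ n, T < t n → t (n + 1) < t n) (n : ℕ) :
    t n ≤ max (t 0) (T + K) := by
  induction n with
  | zero => exact le_max_left _ _
  | succ n ih =>
    rcases lt_or_ge T (t n) with hT | hT
    · exact (hdown n hT).le.trans ih
    · exact (hstep n).trans (le_max_of_le_right (by linarith))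

section DRSequence

variable {u : X} (hu : ‖u‖ = 1) {B : Set X} {x : ℕ → X}
  (hx : ∀ n, IsDRStep u B (x n) (x (n + 1)))
include hu hx

lemma norm_sub_inner_smul_le_of_isDRStep {K : ℝ} (hK : ∀ b ∈ B, ‖b‖ ≤ K) (n : ℕ) :
    ‖x n - ⟪x n, u⟫ • u‖ ≤ max ‖x 0 - ⟪x 0, u⟫ • u‖ K := by
  cases n with
  | zero => exact le_max_left _ _
  | succ n =>
    obtain ⟨b, hb, -, hxn⟩ := hx n
    rw [hxn, inner_smul_add_sub_inner_smul hu]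
    exact le_max_of_le_right ((norm_sub_inner_smul_le hu b).trans (hK b hb))

lemma exists_inner_le_of_isDRStep (hBfin : B.Finite) {bm : X} (hbm : bm ∈ B)
    (hbmu : ⟪bm, u⟫ < 0) : ∃ M : ℝ, ∀ n, ⟪x n, u⟫ ≤ M := by
  obtain ⟨K, hK⟩ := isBounded_iff_forall_norm_le.1 hBfin.isBounded
  set C := max ‖x 0 - ⟪x 0, u⟫ • u‖ K
  set D := C + K
  have hD : ∀ n, ‖(x n - ⟪x n, u⟫ • u) - (bm - ⟪bm, u⟫ • u)‖ ≤ D := fun n =>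
    (norm_sub_le _ _).trans <| add_le_add (norm_sub_inner_smul_le_of_isDRStep hu hx hK n)
      ((norm_sub_inner_smul_le hu bm).trans (hK bm hbm))
  have hstep : ∀ n, ⟪x (n + 1), u⟫ ≤ ⟪x n, u⟫ + K := by
    intro n
    obtain ⟨b, hb, -, hxn⟩ := hx n
    rw [hxn, inner_inner_smul_add hu]
    have := (real_inner_le_norm b u).trans_eq (by rw [hu, mul_one])
    linarith [hK b hb]
  have hdown : ∀ n, (D ^ 2 + ⟪bm, u⟫ ^ 2) / (2 * -⟪bm, u⟫) < ⟪x n, u⟫ →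
      ⟪x (n + 1), u⟫ < ⟪x n, u⟫ := fun n hlarge =>
    (hx n).inner_lt hu hbm hbmu (hD n) <| by
      rw [div_lt_iff₀ (by linarith)] at hlarge
      linarith
  exact ⟨_, le_max_of_step_le_of_decreasing_above hstep hdown⟩

end DRSequence

end DouglasRachford

theorem dr_hyperplane_doubleton_stmt_3_general
    {X : Type*} [NormedAddCommGroup X] [InnerProductSpace ℝ X]
    (u : X) (hu : ‖u‖ = 1)
    (B : Set X) (hBfin : B.Finite)
    (hneg : ∃ b ∈ B, ⟪b, u⟫ < 0) (hpos : ∃ b' ∈ B, 0 < ⟪b', u⟫)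
    (x : ℕ → X)
    (hx : ∀ n : ℕ, ∃ b ∈ B,
      (∀ b' ∈ B, ‖(x n - (2 * ⟪x n, u⟫) • u) - b‖ ≤ ‖(x n - (2 * ⟪x n, u⟫) • u) - b'‖) ∧
      x (n + 1) = ⟪x n, u⟫ • u + b) :
    ∃ M : ℝ, ∀ n : ℕ, ‖x n‖ ≤ M := by
  obtain ⟨bm, hbm, hbmu⟩ := hneg
  obtain ⟨bp, hbp, hbpu⟩ := hpos
  obtain ⟨K, hK⟩ := isBounded_iff_forall_norm_le.1 hBfin.isBounded
  obtain ⟨Mpos, hMpos⟩ := exists_inner_le_of_isDRStep hu hx hBfin hbm hbmu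
  obtain ⟨Mneg, hMneg⟩ := exists_inner_le_of_isDRStep (u := -u) (by rwa [norm_neg])
    (fun n => isDRStep_neg.2 (hx n)) hBfin hbp (by rwa [inner_neg_right, neg_lt_zero])
  refine ⟨max ‖x 0 - ⟪x 0, u⟫ • u‖ K + max Mpos Mneg, fun n => ?_⟩
  have habs : |⟪x n, u⟫| ≤ max Mpos Mneg := by
    have hlow := hMneg n
    rw [inner_neg_right] at hlow
    exact abs_le.2 ⟨by linarith [le_max_right Mpos Mneg], (hMpos n).trans (le_max_left _ _)⟩
  calc ‖x n‖ = ‖(x n - ⟪x n, u⟫ • u) + ⟪x n, u⟫ • u‖ := by rw [sub_add_cancel]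
    _ ≤ ‖x n - ⟪x n, u⟫ • u‖ + |⟪x n, u⟫| := by
      rw [← Real.norm_eq_abs, ← mul_one ‖⟪x n, u⟫‖, ← hu, ← norm_smul]
      exact norm_add_le _ _
    _ ≤ _ := add_le_add (norm_sub_inner_smul_le_of_isDRStep hu hx hK n) habs

/-- If `B` is not contained in one of the two closed halfspaces induced by
the hyperplane `A = {u}ᗮ` (i.e., there are `b, b' ∈ B` with `⟪b,u⟫ < 0 < ⟪b',u⟫`), then
every DR sequence with respect to `(A, B)` is bounded. -/
theorem dr_hyperplane_doubleton_stmt_3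
    {X : Type*} [NormedAddCommGroup X] [InnerProductSpace ℝ X] [FiniteDimensional ℝ X]
    (u : X) (hu : ‖u‖ = 1)
    (B : Set X) (hB : B.Nonempty) (hBfin : B.Finite)
    (hneg : ∃ b ∈ B, ⟪b, u⟫ < 0) (hpos : ∃ b' ∈ B, 0 < ⟪b', u⟫)
    (x : ℕ → X)
    (hx : ∀ n : ℕ, ∃ b ∈ B,
      (∀ b' ∈ B, ‖(x n - (2 * ⟪x n, u⟫) • u) - b‖ ≤ ‖(x n - (2 * ⟪x n, u⟫) • u) - b'‖) ∧
      x (n + 1) = ⟪x n, u⟫ • u + b) :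
    ∃ M : ℝ, ∀ n : ℕ, ‖x n‖ ≤ M :=
  dr_hyperplane_doubleton_stmt_3_general u hu B hBfin hneg hpos x hx
end

section
/- Suppose B is not contained in one of the two closed halfspaces induced by A (there exist b, b' ∈ B with ⟨b, u⟩ < 0 < ⟨b', u⟩) and that A ∩ B = ∅. Then every DR sequence (x_n)_{n∈ℕ} with respect to (A, B) is not convergent and satisfies ‖x_{n+1} − x_n‖ ≥ min_{b ∈ B} |⟨b, u⟩| > 0 for all n ∈ ℕ. -/
open Filter
open scoped RealInnerProductSpace

/-- If `B` is not contained in one of the two closed halfspaces induced by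
the hyperplane `A = {u}ᗮ` and `A ∩ B = ∅`, then every DR sequence with respect to `(A, B)`
is not convergent and satisfies `‖x (n+1) - x n‖ ≥ min_{b ∈ B} |⟪b, u⟫| > 0` for all `n`. -/
theorem dr_hyperplane_doubleton_stmt_4
    {X : Type*} [NormedAddCommGroup X] [InnerProductSpace ℝ X] [FiniteDimensional ℝ X]
    (u : X) (hu : ‖u‖ = 1)
    (B : Set X) (hB : B.Nonempty) (hBfin : B.Finite)
    (hneg : ∃ b ∈ B, ⟪b, u⟫ < 0) (hpos : ∃ b' ∈ B, 0 < ⟪b', u⟫)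
    (hAB : {y : X | ⟪y, u⟫ = 0} ∩ B = ∅)
    (x : ℕ → X)
    (hx : ∀ n : ℕ, ∃ b ∈ B,
      (∀ b' ∈ B, ‖(x n - (2 * ⟪x n, u⟫) • u) - b‖ ≤ ‖(x n - (2 * ⟪x n, u⟫) • u) - b'‖) ∧
      x (n + 1) = ⟪x n, u⟫ • u + b) :
    (¬ ∃ l : X, Tendsto x atTop (nhds l)) ∧
    (0 < sInf ((fun b : X => |⟪b, u⟫|) '' B)) ∧
    (∀ n : ℕ, sInf ((fun b : X => |⟪b, u⟫|) '' B) ≤ ‖x (n + 1) - x n‖) := by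
  set f : X → ℝ := fun b => |⟪b, u⟫| with hf
  have huu : ⟪u, u⟫ = (1 : ℝ) := by
    rw [real_inner_self_eq_norm_sq, hu]; norm_num
  have hfin : (f '' B).Finite := hBfin.image f
  have hne : (f '' B).Nonempty := hB.image f
  have hbdd : BddBelow (f '' B) := hfin.bddBelow
  have hpos0 : 0 < sInf (f '' B) := by
    obtain ⟨b, hb, hbe⟩ := hne.csInf_mem hfin
    rw [← hbe]
    have hbne : ⟪b, u⟫ ≠ 0 := by
      intro h
      have : b ∈ ({y : X | ⟪y, u⟫ = 0} ∩ B) := ⟨h, hb⟩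
      rw [hAB] at this
      exact this
    exact abs_pos.mpr hbne
  have key : ∀ n, sInf (f '' B) ≤ ‖x (n + 1) - x n‖ := by
    intro n
    obtain ⟨b, hb, -, heq⟩ := hx n
    have h1 : sInf (f '' B) ≤ |⟪b, u⟫| := csInf_le hbdd ⟨b, hb, rfl⟩
    have h2 : ⟪x (n + 1) - x n, u⟫ = ⟪b, u⟫ := by
      rw [heq, inner_sub_left, inner_add_left, real_inner_smul_left, huu]
      ring
    calc sInf (f '' B) ≤ |⟪b, u⟫| := h1
      _ = |⟪x (n + 1) - x n, u⟫| := by rw [h2]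
      _ ≤ ‖x (n + 1) - x n‖ * ‖u‖ := abs_real_inner_le_norm _ _
      _ = ‖x (n + 1) - x n‖ := by rw [hu, mul_one]
  refine ⟨?_, hpos0, key⟩
  rintro ⟨l, hl⟩
  have h2 : Tendsto (fun n => x (n + 1) - x n) atTop (nhds 0) := by
    have := (hl.comp (tendsto_add_atTop_nat 1)).sub hl
    simpa using this
  have h3 : Tendsto (fun n => ‖x (n + 1) - x n‖) atTop (nhds 0) := by
    simpa using h2.norm
  have := ge_of_tendsto' h3 key
  linarith
end

section
/- Every DR sequence (x_n)_{n∈ℕ} with respect to (A, B), where B = {b_1, b_2} with ⟨b_1, u⟩ < 0 < ⟨b_2, u⟩, is bounded, is not convergent, and satisfies ‖x_{n+1} − x_n‖ ≥ min{ |⟨b_1, u⟩|, ⟨b_2, u⟩ } > 0 for all n ∈ ℕ. -/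
open Filter
open scoped RealInnerProductSpace

private lemma near_ineq {X : Type*} [NormedAddCommGroup X] [InnerProductSpace ℝ X]
    (y c c' : X) (h : ‖y - c‖ ≤ ‖y - c'‖) :
    ⟪y, c'⟫ - ⟪y, c⟫ ≤ (‖c'‖ ^ 2 - ‖c‖ ^ 2) / 2 := by
  have h2 := pow_le_pow_left₀ (norm_nonneg _) h 2
  rw [norm_sub_sq_real, norm_sub_sq_real] at h2
  linarith

private lemma aux_ineq {X : Type*} [NormedAddCommGroup X] [InnerProductSpace ℝ X]
    (y bp c c' u : X) (t p : ℝ)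
    (hyc : ⟪y, c⟫ = -(t + p) * ⟪c, u⟫ + ⟪bp, c⟫)
    (hyc' : ⟪y, c'⟫ = -(t + p) * ⟪c', u⟫ + ⟪bp, c'⟫)
    (h : ‖y - c‖ ≤ ‖y - c'‖) :
    (t + p) * (⟪c, u⟫ - ⟪c', u⟫) ≤ (‖c'‖ ^ 2 - ‖c‖ ^ 2) / 2 - ⟪bp, c'⟫ + ⟪bp, c⟫ := by
  have hA := near_ineq y c c' h
  rw [hyc, hyc'] at hA
  nlinarith [hA]

/-- Every DR sequence with respect to the hyperplane `A = {u}ᗮ` and the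
doubleton `B = {b₁, b₂}` with `⟪b₁,u⟫ < 0 < ⟪b₂,u⟫` is bounded, not convergent, and
satisfies `‖x (n+1) - x n‖ ≥ min {|⟪b₁,u⟫|, ⟪b₂,u⟫} > 0` for all `n`. -/
theorem dr_hyperplane_doubleton_stmt_5
    {X : Type*} [NormedAddCommGroup X] [InnerProductSpace ℝ X] [FiniteDimensional ℝ X]
    (u : X) (hu : ‖u‖ = 1)
    (b₁ b₂ : X) (hb₁ : ⟪b₁, u⟫ < 0) (hb₂ : 0 < ⟪b₂, u⟫)
    (x : ℕ → X)
    (hx : ∀ n : ℕ, ∃ b ∈ ({b₁, b₂} : Set X),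
      (∀ b' ∈ ({b₁, b₂} : Set X),
        ‖(x n - (2 * ⟪x n, u⟫) • u) - b‖ ≤ ‖(x n - (2 * ⟪x n, u⟫) • u) - b'‖) ∧
      x (n + 1) = ⟪x n, u⟫ • u + b) :
    (∃ M : ℝ, ∀ n : ℕ, ‖x n‖ ≤ M) ∧
    (¬ ∃ l : X, Tendsto x atTop (nhds l)) ∧
    (0 < min |⟪b₁, u⟫| ⟪b₂, u⟫) ∧
    (∀ n : ℕ, min |⟪b₁, u⟫| ⟪b₂, u⟫ ≤ ‖x (n + 1) - x n‖) := by
  have huu : ⟪u, u⟫ = 1 := by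
    rw [real_inner_self_eq_norm_sq, hu]; norm_num
  have hδ : 0 < min |⟪b₁, u⟫| ⟪b₂, u⟫ := lt_min (abs_pos.mpr hb₁.ne) hb₂
  -- step bound
  have hstep4 : ∀ n : ℕ, min |⟪b₁, u⟫| ⟪b₂, u⟫ ≤ ‖x (n + 1) - x n‖ := by
    intro n
    obtain ⟨b, hbB, hnear, heq⟩ := hx n
    have h1 : ⟪x (n + 1) - x n, u⟫ = ⟪b, u⟫ := by
      rw [inner_sub_left, heq, inner_add_left, real_inner_smul_left, huu]; ring
    have h2 : |⟪x (n + 1) - x n, u⟫| ≤ ‖x (n + 1) - x n‖ := by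
      calc |⟪x (n + 1) - x n, u⟫| ≤ ‖x (n + 1) - x n‖ * ‖u‖ := abs_real_inner_le_norm _ _
        _ = ‖x (n + 1) - x n‖ := by rw [hu, mul_one]
    rw [h1] at h2
    simp only [Set.mem_insert_iff, Set.mem_singleton_iff] at hbB
    rcases hbB with rfl | rfl
    · exact le_trans (min_le_left _ _) h2
    · exact le_trans (min_le_right _ _) (le_trans (le_abs_self _) h2)
  -- constants
  set M₀ : ℝ := max ‖b₁‖ ‖b₂‖ with hM₀def
  have hb1M : ‖b₁‖ ≤ M₀ := le_max_left _ _
  have hb2M : ‖b₂‖ ≤ M₀ := le_max_right _ _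
  have hM₀0 : (0:ℝ) ≤ M₀ := le_trans (norm_nonneg _) hb1M
  have hd : (0:ℝ) < ⟪b₂, u⟫ - ⟪b₁, u⟫ := by linarith
  set K : ℝ := ((‖b₁‖ ^ 2 + ‖b₂‖ ^ 2) / 2 + 2 * M₀ ^ 2 + M₀ * (⟪b₂, u⟫ - ⟪b₁, u⟫)) /
      (⟪b₂, u⟫ - ⟪b₁, u⟫) with hKdef
  -- key selection bound
  have key2 : ∀ n : ℕ, ∀ bp ∈ ({b₁, b₂} : Set X), x (n + 1) = ⟪x n, u⟫ • u + bp →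
      ((‖(x (n + 1) - (2 * ⟪x (n + 1), u⟫) • u) - b₂‖ ≤
          ‖(x (n + 1) - (2 * ⟪x (n + 1), u⟫) • u) - b₁‖ → ⟪x (n + 1), u⟫ ≤ K) ∧
       (‖(x (n + 1) - (2 * ⟪x (n + 1), u⟫) • u) - b₁‖ ≤
          ‖(x (n + 1) - (2 * ⟪x (n + 1), u⟫) • u) - b₂‖ → -K ≤ ⟪x (n + 1), u⟫)) := by
    intro n bp hbp hxeq
    have hbpn : ‖bp‖ ≤ M₀ := by
      simp only [Set.mem_insert_iff, Set.mem_singleton_iff] at hbp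
      rcases hbp with rfl | rfl
      · exact hb1M
      · exact hb2M
    have ht1 : ⟪x (n + 1), u⟫ = ⟪x n, u⟫ + ⟪bp, u⟫ := by
      rw [hxeq, inner_add_left, real_inner_smul_left, huu]; ring
    have ey : ∀ c : X, ⟪x (n + 1) - (2 * ⟪x (n + 1), u⟫) • u, c⟫ =
        -(⟪x (n + 1), u⟫ + ⟪bp, u⟫) * ⟪c, u⟫ + ⟪bp, c⟫ := by
      intro c
      have h1 : ⟪x (n + 1), c⟫ = ⟪x n, u⟫ * ⟪u, c⟫ + ⟪bp, c⟫ := by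
        rw [hxeq, inner_add_left, real_inner_smul_left]
      rw [inner_sub_left, real_inner_smul_left, h1, ht1, real_inner_comm u c]; ring
    have hpu : |⟪bp, u⟫| ≤ M₀ := by
      calc |⟪bp, u⟫| ≤ ‖bp‖ * ‖u‖ := abs_real_inner_le_norm _ _
        _ = ‖bp‖ := by rw [hu, mul_one]
        _ ≤ M₀ := hbpn
    have hq1 : |⟪bp, b₁⟫| ≤ M₀ * M₀ :=
      le_trans (abs_real_inner_le_norm _ _) (mul_le_mul hbpn hb1M (norm_nonneg _) hM₀0)
    have hq2 : |⟪bp, b₂⟫| ≤ M₀ * M₀ :=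
      le_trans (abs_real_inner_le_norm _ _) (mul_le_mul hbpn hb2M (norm_nonneg _) hM₀0)
    obtain ⟨hpu1, hpu2⟩ := abs_le.mp hpu
    obtain ⟨hq11, hq12⟩ := abs_le.mp hq1
    obtain ⟨hq21, hq22⟩ := abs_le.mp hq2
    constructor
    · intro h
      have hmain := aux_ineq (x (n + 1) - (2 * ⟪x (n + 1), u⟫) • u) bp b₂ b₁ u
        ⟪x (n + 1), u⟫ ⟪bp, u⟫ (ey b₂) (ey b₁) h
      rw [hKdef, le_div_iff₀ hd]
      nlinarith [mul_le_mul_of_nonneg_right hpu1 hd.le, sq_nonneg ‖b₂‖, sq_nonneg ‖b₁‖]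
    · intro h
      have hmain := aux_ineq (x (n + 1) - (2 * ⟪x (n + 1), u⟫) • u) bp b₁ b₂ u
        ⟪x (n + 1), u⟫ ⟪bp, u⟫ (ey b₁) (ey b₂) h
      have h' : -⟪x (n + 1), u⟫ * (⟪b₂, u⟫ - ⟪b₁, u⟫) ≤
          (‖b₁‖ ^ 2 + ‖b₂‖ ^ 2) / 2 + 2 * M₀ ^ 2 + M₀ * (⟪b₂, u⟫ - ⟪b₁, u⟫) := by
        nlinarith [mul_le_mul_of_nonneg_right hpu1 hd.le, sq_nonneg ‖b₂‖, sq_nonneg ‖b₁‖]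
      have := (le_div_iff₀ hd).mpr h'
      rw [hKdef]
      linarith
  -- bound on the normal coordinate
  set L : ℝ := max |⟪x 1, u⟫| (K + |⟪b₁, u⟫| + ⟪b₂, u⟫) with hLdef
  have habs : ∀ n : ℕ, |⟪x (n + 1), u⟫| ≤ L := by
    intro n
    induction n with
    | zero => exact le_max_left _ _
    | succ m ih =>
      obtain ⟨bp, hbpB, _, hxeq⟩ := hx m
      obtain ⟨b, hbB, hnear, heq⟩ := hx (m + 1)
      have hkey := key2 m bp hbpB hxeq
      have hstep : ⟪x (m + 1 + 1), u⟫ = ⟪x (m + 1), u⟫ + ⟪b, u⟫ := by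
        rw [heq, inner_add_left, real_inner_smul_left, huu]; ring
      have hL1 : K + |⟪b₁, u⟫| + ⟪b₂, u⟫ ≤ L := le_max_right _ _
      have habs1 : |⟪b₁, u⟫| = -⟪b₁, u⟫ := abs_of_neg hb₁
      obtain ⟨ih1, ih2⟩ := abs_le.mp ih
      simp only [Set.mem_insert_iff, Set.mem_singleton_iff] at hbB
      rcases hbB with rfl | rfl
      · have h1 := hkey.2 (hnear b₂ (by simp))
        rw [abs_le, hstep]
        constructor <;> linarith
      · have h1 := hkey.1 (hnear b₁ (by simp))
        rw [abs_le, hstep]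
        constructor <;> linarith
  refine ⟨⟨max ‖x 0‖ (max ‖x 1‖ (L + M₀)), ?_⟩, ?_, hδ, hstep4⟩
  · intro n
    match n with
    | 0 => exact le_max_left _ _
    | 1 => exact le_trans (le_max_left _ _) (le_max_right _ _)
    | (m + 2) =>
      obtain ⟨b, hbB, _, heq⟩ := hx (m + 1)
      have hbn : ‖b‖ ≤ M₀ := by
        simp only [Set.mem_insert_iff, Set.mem_singleton_iff] at hbB
        rcases hbB with rfl | rfl
        · exact hb1M
        · exact hb2M
      have : ‖x (m + 2)‖ ≤ L + M₀ := by
        rw [heq]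
        calc ‖⟪x (m + 1), u⟫ • u + b‖ ≤ ‖⟪x (m + 1), u⟫ • u‖ + ‖b‖ := norm_add_le _ _
          _ = |⟪x (m + 1), u⟫| * ‖u‖ + ‖b‖ := by rw [norm_smul, Real.norm_eq_abs]
          _ ≤ L + M₀ := by rw [hu, mul_one]; exact add_le_add (habs m) hbn
      exact le_trans this (le_trans (le_max_right _ _) (le_max_right _ _))
  · rintro ⟨l, hl⟩
    have h1 : Tendsto (fun n => x (n + 1)) atTop (nhds l) :=
      hl.comp (tendsto_add_atTop_nat 1)
    have h2 : Tendsto (fun n => ‖x (n + 1) - x n‖) atTop (nhds 0) := by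
      have := (h1.sub hl).norm
      simpa using this
    have h3 : min |⟪b₁, u⟫| ⟪b₂, u⟫ ≤ 0 := ge_of_tendsto' h2 fun n => hstep4 n
    linarith
end

section
/- Let (x_n) be a DR sequence with respect to (A, B), B = {b_1, b_2}, and let n ≥ 1. Then: (i) if x_n = ⟨x_{n−1}, u⟩u + b_1 and ⟨x_n, u⟩ > β − β_1 then x_{n+1} = ⟨x_n, u⟩u + b_1; (ii) if x_n = ⟨x_{n−1}, u⟩u + b_1 and ⟨x_n, u⟩ < β − β_1 then x_{n+1} = ⟨x_n, u⟩u + b_2; (iii) if x_n = ⟨x_{n−1}, u⟩u + b_2 and ⟨x_n, u⟩ > −β − β_2 then x_{n+1} = ⟨x_n, u⟩u + b_1; (iv) if x_n = ⟨x_{n−1}, u⟩u + b_2 and ⟨x_n, u⟩ < −β − β_2 then x_{n+1} = ⟨x_n, u⟩u + b_2. -/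
open Filter
open scoped RealInnerProductSpace

lemma aux_norm_sub_smul {X : Type*} [NormedAddCommGroup X] [InnerProductSpace ℝ X]
    (u a : X) (hu : ‖u‖ = 1) (c : ℝ) :
    ‖a - c • u‖ ^ 2 = ‖a‖ ^ 2 - 2 * c * ⟪a, u⟫ + c ^ 2 := by
  rw [norm_sub_sq_real, real_inner_smul_right, norm_smul, hu]
  simp [sq_abs]
  ring


/-- transition rules for a DR sequence with respect to the hyperplane
`A = {u}ᗮ` and the doubleton `B = {b₁, b₂}`, where `β₁ = ⟪b₁,u⟫`, `β₂ = ⟪b₂,u⟫` and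
`β = -‖b₁ - b₂‖² / (2⟪b₂ - b₁, u⟫)`. -/
theorem dr_hyperplane_doubleton_stmt_6
    {X : Type*} [NormedAddCommGroup X] [InnerProductSpace ℝ X] [FiniteDimensional ℝ X]
    (u : X) (hu : ‖u‖ = 1)
    (b₁ b₂ : X) (hb₁ : ⟪b₁, u⟫ < 0) (hb₂ : 0 < ⟪b₂, u⟫)
    (β₁ β₂ β : ℝ) (hβ₁ : β₁ = ⟪b₁, u⟫) (hβ₂ : β₂ = ⟪b₂, u⟫)
    (hβ : β = -‖b₁ - b₂‖ ^ 2 / (2 * ⟪b₂ - b₁, u⟫))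
    (x : ℕ → X)
    (hx : ∀ n : ℕ, ∃ b ∈ ({b₁, b₂} : Set X),
      (∀ b' ∈ ({b₁, b₂} : Set X),
        ‖(x n - (2 * ⟪x n, u⟫) • u) - b‖ ≤ ‖(x n - (2 * ⟪x n, u⟫) • u) - b'‖) ∧
      x (n + 1) = ⟪x n, u⟫ • u + b)
    (n : ℕ) (hn : 1 ≤ n) :
    (x n = ⟪x (n - 1), u⟫ • u + b₁ → β - β₁ < ⟪x n, u⟫ →
      x (n + 1) = ⟪x n, u⟫ • u + b₁) ∧
    (x n = ⟪x (n - 1), u⟫ • u + b₁ → ⟪x n, u⟫ < β - β₁ →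
      x (n + 1) = ⟪x n, u⟫ • u + b₂) ∧
    (x n = ⟪x (n - 1), u⟫ • u + b₂ → -β - β₂ < ⟪x n, u⟫ →
      x (n + 1) = ⟪x n, u⟫ • u + b₁) ∧
    (x n = ⟪x (n - 1), u⟫ • u + b₂ → ⟪x n, u⟫ < -β - β₂ →
      x (n + 1) = ⟪x n, u⟫ • u + b₂) := by
  obtain ⟨b, hbmem, hbmin, hbeq⟩ := hx n
  have huu : ⟪u, u⟫ = (1 : ℝ) := by
    rw [real_inner_self_eq_norm_sq, hu]; norm_num
  have hd : (0 : ℝ) < β₂ - β₁ := by rw [hβ₁, hβ₂]; linarith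
  have hβ' : β * (2 * (β₂ - β₁)) = -‖b₁ - b₂‖ ^ 2 := by
    have h21 : ⟪b₂ - b₁, u⟫ = β₂ - β₁ := by
      rw [inner_sub_left, hβ₁, hβ₂]
    rw [hβ, h21]
    field_simp
  have h12 : ⟪b₁ - b₂, u⟫ = β₁ - β₂ := by rw [inner_sub_left, hβ₁, hβ₂]
  have h21 : ⟪b₂ - b₁, u⟫ = β₂ - β₁ := by rw [inner_sub_left, hβ₁, hβ₂]
  have hnrev : ‖b₂ - b₁‖ = ‖b₁ - b₂‖ := norm_sub_rev _ _
  set s := ⟪x (n - 1), u⟫ with hsdef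
  set t := ⟪x n, u⟫ with htdef
  refine ⟨?_, ?_, ?_, ?_⟩ <;> intro hxe hin
  -- Case 1
  · have ht : t = s + β₁ := by
      rw [htdef, hxe, inner_add_left, real_inner_smul_left, huu, hβ₁]; ring
    have hy : x n - (2 * t) • u = b₁ - (t + β₁) • u := by
      rw [hxe, ht]; module
    rcases hbmem with hbb | hbb <;> rw [hbb] at hbmin hbeq
    · exact hbeq
    · exfalso
      have h := hbmin b₁ (Or.inl rfl)
      rw [hy] at h
      have e1 : (b₁ - (t + β₁) • u) - b₂ = (b₁ - b₂) - (t + β₁) • u := by module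
      have e2 : (b₁ - (t + β₁) • u) - b₁ = (0 : X) - (t + β₁) • u := by module
      rw [e1, e2] at h
      have hsq : ‖(b₁ - b₂) - (t + β₁) • u‖ ^ 2 ≤ ‖(0 : X) - (t + β₁) • u‖ ^ 2 :=
        pow_le_pow_left₀ (norm_nonneg _) h 2
      rw [aux_norm_sub_smul u _ hu, aux_norm_sub_smul u _ hu, h12] at hsq
      simp only [norm_zero, inner_zero_left] at hsq
      nlinarith [mul_pos hd (show (0:ℝ) < t + β₁ - β by linarith)]
  -- Case 2
  · have ht : t = s + β₁ := by
      rw [htdef, hxe, inner_add_left, real_inner_smul_left, huu, hβ₁]; ring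
    have hy : x n - (2 * t) • u = b₁ - (t + β₁) • u := by
      rw [hxe, ht]; module
    rcases hbmem with hbb | hbb <;> rw [hbb] at hbmin hbeq
    · exfalso
      have h := hbmin b₂ (Or.inr rfl)
      rw [hy] at h
      have e1 : (b₁ - (t + β₁) • u) - b₂ = (b₁ - b₂) - (t + β₁) • u := by module
      have e2 : (b₁ - (t + β₁) • u) - b₁ = (0 : X) - (t + β₁) • u := by module
      rw [e1, e2] at h
      have hsq : ‖(0 : X) - (t + β₁) • u‖ ^ 2 ≤ ‖(b₁ - b₂) - (t + β₁) • u‖ ^ 2 :=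
        pow_le_pow_left₀ (norm_nonneg _) h 2
      rw [aux_norm_sub_smul u _ hu, aux_norm_sub_smul u _ hu, h12] at hsq
      simp only [norm_zero, inner_zero_left] at hsq
      nlinarith [mul_pos hd (show (0:ℝ) < β - (t + β₁) by linarith)]
    · exact hbeq
  -- Case 3
  · have ht : t = s + β₂ := by
      rw [htdef, hxe, inner_add_left, real_inner_smul_left, huu, hβ₂]; ring
    have hy : x n - (2 * t) • u = b₂ - (t + β₂) • u := by
      rw [hxe, ht]; module
    rcases hbmem with hbb | hbb <;> rw [hbb] at hbmin hbeq
    · exact hbeq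
    · exfalso
      have h := hbmin b₁ (Or.inl rfl)
      rw [hy] at h
      have e1 : (b₂ - (t + β₂) • u) - b₁ = (b₂ - b₁) - (t + β₂) • u := by module
      have e2 : (b₂ - (t + β₂) • u) - b₂ = (0 : X) - (t + β₂) • u := by module
      rw [e1, e2] at h
      have hsq : ‖(0 : X) - (t + β₂) • u‖ ^ 2 ≤ ‖(b₂ - b₁) - (t + β₂) • u‖ ^ 2 :=
        pow_le_pow_left₀ (norm_nonneg _) h 2
      rw [aux_norm_sub_smul u _ hu, aux_norm_sub_smul u _ hu, h21, hnrev] at hsq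
      simp only [norm_zero, inner_zero_left] at hsq
      nlinarith [mul_pos hd (show (0:ℝ) < t + β₂ + β by linarith)]
  -- Case 4
  · have ht : t = s + β₂ := by
      rw [htdef, hxe, inner_add_left, real_inner_smul_left, huu, hβ₂]; ring
    have hy : x n - (2 * t) • u = b₂ - (t + β₂) • u := by
      rw [hxe, ht]; module
    rcases hbmem with hbb | hbb <;> rw [hbb] at hbmin hbeq
    · exfalso
      have h := hbmin b₂ (Or.inr rfl)
      rw [hy] at h
      have e1 : (b₂ - (t + β₂) • u) - b₁ = (b₂ - b₁) - (t + β₂) • u := by module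
      have e2 : (b₂ - (t + β₂) • u) - b₂ = (0 : X) - (t + β₂) • u := by module
      rw [e1, e2] at h
      have hsq : ‖(b₂ - b₁) - (t + β₂) • u‖ ^ 2 ≤ ‖(0 : X) - (t + β₂) • u‖ ^ 2 :=
        pow_le_pow_left₀ (norm_nonneg _) h 2
      rw [aux_norm_sub_smul u _ hu, aux_norm_sub_smul u _ hu, h21, hnrev] at hsq
      simp only [norm_zero, inner_zero_left] at hsq
      nlinarith [mul_pos hd (show (0:ℝ) < -(β) - (t + β₂) by linarith)]
    · exact hbeq
end

section
/- For every DR sequence (x_n) with respect to (A, B), B = {b_1, b_2}, there exist nondecreasing sequences (l_{1,n})_{n∈ℕ} and (l_{2,n})_{n∈ℕ} of natural numbers such that for all n ∈ ℕ: ⟨x_n, u⟩ = ⟨x_0, u⟩ + l_{1,n}·⟨b_1, u⟩ + l_{2,n}·⟨b_2, u⟩ and l_{1,n} + l_{2,n} = n. -/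
open Filter
open scoped RealInnerProductSpace

/-- For every DR sequence with respect to the hyperplane `A = {u}ᗮ` and the
doubleton `B = {b₁, b₂}`, there are nondecreasing sequences `l₁, l₂ : ℕ → ℕ` with
`⟪x n, u⟫ = ⟪x 0, u⟫ + l₁ n • ⟪b₁,u⟫ + l₂ n • ⟪b₂,u⟫` and `l₁ n + l₂ n = n` for all `n`. -/
theorem dr_hyperplane_doubleton_stmt_7
    {X : Type*} [NormedAddCommGroup X] [InnerProductSpace ℝ X] [FiniteDimensional ℝ X]
    (u : X) (hu : ‖u‖ = 1)
    (b₁ b₂ : X) (hb₁ : ⟪b₁, u⟫ < 0) (hb₂ : 0 < ⟪b₂, u⟫)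
    (x : ℕ → X)
    (hx : ∀ n : ℕ, ∃ b ∈ ({b₁, b₂} : Set X),
      (∀ b' ∈ ({b₁, b₂} : Set X),
        ‖(x n - (2 * ⟪x n, u⟫) • u) - b‖ ≤ ‖(x n - (2 * ⟪x n, u⟫) • u) - b'‖) ∧
      x (n + 1) = ⟪x n, u⟫ • u + b) :
    ∃ l₁ l₂ : ℕ → ℕ, Monotone l₁ ∧ Monotone l₂ ∧
      ∀ n : ℕ, ⟪x n, u⟫ = ⟪x 0, u⟫ + (l₁ n : ℝ) * ⟪b₁, u⟫ + (l₂ n : ℝ) * ⟪b₂, u⟫ ∧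
        l₁ n + l₂ n = n := by
  choose b hmem hx' using hx
  classical
  refine ⟨fun n => ∑ i ∈ Finset.range n, if b i = b₁ then 1 else 0,
    fun n => ∑ i ∈ Finset.range n, if b i = b₁ then 0 else 1, ?_, ?_, ?_⟩
  · exact fun m n h => Finset.sum_le_sum_of_subset (Finset.range_subset_range.2 h)
  · exact fun m n h => Finset.sum_le_sum_of_subset (Finset.range_subset_range.2 h)
  · intro n
    have huu : ⟪u, u⟫ = (1 : ℝ) := by
      rw [real_inner_self_eq_norm_sq, hu]; norm_num
    have key : ∀ m, ⟪x (m + 1), u⟫ = ⟪x m, u⟫ + ⟪b m, u⟫ := by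
      intro m
      rw [(hx' m).2, inner_add_left, real_inner_smul_left, huu, mul_one]
    induction n with
    | zero => simp
    | succ n ih =>
      simp only [] at ih ⊢
      constructor
      · rw [key n]
        rcases hmem n with h | h'
        · rw [ih.1, Finset.sum_range_succ, Finset.sum_range_succ, if_pos h, if_pos h, h]
          push_cast; ring
        · have h : b n = b₂ := h'
          have hne : b n ≠ b₁ := by
            intro he
            rw [← he, h] at hb₁; linarith
          rw [ih.1, Finset.sum_range_succ, Finset.sum_range_succ, if_neg hne, if_neg hne, h]
          push_cast; ring
      · have h2 := ih.2
        rw [Finset.sum_range_succ, Finset.sum_range_succ]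
        split_ifs <;> omega
end

section
/- Suppose some DR sequence (x_n) with respect to (A, B = {b_1, b_2}) cycles after a certain number of steps, i.e., there exist n_0 ∈ ℕ and m ≥ 1 such that x_{n+m} = x_n for all n ≥ n_0. Then d_A(b_1)/d_A(b_2) = −⟨b_1, u⟩/⟨b_2, u⟩ is a rational number. -/
open Filter
open scoped RealInnerProductSpace

/-- If some DR sequence with respect to the hyperplane `A = {u}ᗮ` and the
doubleton `B = {b₁, b₂}` cycles after a certain number of steps, then
`d_A(b₁)/d_A(b₂) = -⟪b₁,u⟫/⟪b₂,u⟫` is rational. -/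
theorem dr_hyperplane_doubleton_stmt_10
    {X : Type*} [NormedAddCommGroup X] [InnerProductSpace ℝ X] [FiniteDimensional ℝ X]
    (u : X) (hu : ‖u‖ = 1)
    (b₁ b₂ : X) (hb₁ : ⟪b₁, u⟫ < 0) (hb₂ : 0 < ⟪b₂, u⟫)
    (x : ℕ → X)
    (hx : ∀ n : ℕ, ∃ b ∈ ({b₁, b₂} : Set X),
      (∀ b' ∈ ({b₁, b₂} : Set X),
        ‖(x n - (2 * ⟪x n, u⟫) • u) - b‖ ≤ ‖(x n - (2 * ⟪x n, u⟫) • u) - b'‖) ∧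
      x (n + 1) = ⟪x n, u⟫ • u + b)
    (hcyc : ∃ n₀ m : ℕ, 1 ≤ m ∧ ∀ n : ℕ, n₀ ≤ n → x (n + m) = x n) :
    ∃ q : ℚ, -⟪b₁, u⟫ / ⟪b₂, u⟫ = (q : ℝ) := by
  obtain ⟨n₀, m, hm, hcyc⟩ := hcyc
  have huu : ⟪u, u⟫ = 1 := by
    rw [real_inner_self_eq_norm_mul_norm, hu]; ring
  set t : ℕ → ℝ := fun n => ⟪x n, u⟫ with ht
  have hstep : ∀ n, t (n + 1) = t n + ⟪b₁, u⟫ ∨ t (n + 1) = t n + ⟪b₂, u⟫ := by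
    intro n
    obtain ⟨b, hb, _, hxn⟩ := hx n
    have hbval : t (n + 1) = t n + ⟪b, u⟫ := by
      simp only [ht, hxn, inner_add_left, real_inner_smul_left, huu]
      ring
    rcases hb with hb | hb
    · left; rw [hbval, hb]
    · right; rw [hbval, Set.mem_singleton_iff.mp hb]
  have key : ∀ j : ℕ, ∃ k ≤ j,
      t (n₀ + j) = t n₀ + (k : ℝ) * ⟪b₁, u⟫ + ((j : ℝ) - (k : ℝ)) * ⟪b₂, u⟫ := by
    intro j
    induction j with
    | zero => exact ⟨0, le_refl 0, by simp⟩
    | succ j ih =>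
      obtain ⟨k, hk, heq⟩ := ih
      rcases hstep (n₀ + j) with h | h
      · refine ⟨k + 1, by omega, ?_⟩
        rw [show n₀ + (j + 1) = (n₀ + j) + 1 from rfl, h, heq]
        push_cast; ring
      · refine ⟨k, by omega, ?_⟩
        rw [show n₀ + (j + 1) = (n₀ + j) + 1 from rfl, h, heq]
        push_cast; ring
  obtain ⟨k, hk, heq⟩ := key m
  have hc : t (n₀ + m) = t n₀ := by
    simp only [ht, hcyc n₀ le_rfl]
  have h0 : (k : ℝ) * ⟪b₁, u⟫ + ((m : ℝ) - (k : ℝ)) * ⟪b₂, u⟫ = 0 := by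
    rw [hc] at heq; linarith
  have hkpos : 0 < k := by
    rcases Nat.eq_zero_or_pos k with rfl | h
    · exfalso
      simp at h0
      rcases h0 with h0 | h0
      · omega
      · linarith
    · exact h
  refine ⟨((m : ℚ) - (k : ℚ)) / (k : ℚ), ?_⟩
  have hkR : (k : ℝ) ≠ 0 := by positivity
  have hb₂' : ⟪b₂, u⟫ ≠ 0 := ne_of_gt hb₂
  push_cast
  field_simp
  nlinarith [h0]
end

section
/- Let (x_n) be a DR sequence (with the tie convention) with respect to (A, B = {b_1, b_2}) and let n ≥ 1. If x_n = ⟨x_{n−1}, u⟩u + b_1 and ⟨x_n, u⟩ ∈ (β − β_1, β + β_2], then x_{n+1} = ⟨x_n, u⟩u + b_1 and ⟨x_{n+1}, u⟩ = ⟨x_n, u⟩ + β_1 ∈ (β, β + β_2]. -/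
open Filter
open scoped RealInnerProductSpace

/-- For a DR sequence (with the tie convention choosing `b₂`) with respect to
the hyperplane `A = {u}ᗮ` and `B = {b₁, b₂}`: if `n ≥ 1`, `x n = ⟪x (n-1),u⟫ • u + b₁` and
`⟪x n, u⟫ ∈ (β - β₁, β + β₂]`, then `x (n+1) = ⟪x n,u⟫ • u + b₁` and
`⟪x (n+1), u⟫ = ⟪x n, u⟫ + β₁ ∈ (β, β + β₂]`. -/
theorem dr_hyperplane_doubleton_stmt_11
    {X : Type*} [NormedAddCommGroup X] [InnerProductSpace ℝ X] [FiniteDimensional ℝ X]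
    (u : X) (hu : ‖u‖ = 1)
    (b₁ b₂ : X) (hb₁ : ⟪b₁, u⟫ < 0) (hb₂ : 0 < ⟪b₂, u⟫)
    (β₁ β₂ β : ℝ) (hβ₁ : β₁ = ⟪b₁, u⟫) (hβ₂ : β₂ = ⟪b₂, u⟫)
    (hβ : β = -‖b₁ - b₂‖ ^ 2 / (2 * ⟪b₂ - b₁, u⟫))
    (x : ℕ → X)
    (hx : ∀ n : ℕ,
      (‖(x n - (2 * ⟪x n, u⟫) • u) - b₁‖ < ‖(x n - (2 * ⟪x n, u⟫) • u) - b₂‖ →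
        x (n + 1) = ⟪x n, u⟫ • u + b₁) ∧
      (‖(x n - (2 * ⟪x n, u⟫) • u) - b₂‖ ≤ ‖(x n - (2 * ⟪x n, u⟫) • u) - b₁‖ →
        x (n + 1) = ⟪x n, u⟫ • u + b₂))
    (n : ℕ) (hn : 1 ≤ n)
    (h1 : x n = ⟪x (n - 1), u⟫ • u + b₁)
    (h2 : ⟪x n, u⟫ ∈ Set.Ioc (β - β₁) (β + β₂)) :
    x (n + 1) = ⟪x n, u⟫ • u + b₁ ∧
    ⟪x (n + 1), u⟫ = ⟪x n, u⟫ + β₁ ∧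
    ⟪x (n + 1), u⟫ ∈ Set.Ioc β (β + β₂) := by
  obtain ⟨ht1, ht2⟩ := h2
  set t := ⟪x n, u⟫ with htdef
  set s := ⟪x (n - 1), u⟫ with hsdef
  have huu : ⟪u, u⟫ = 1 := by
    rw [real_inner_self_eq_norm_sq, hu]; norm_num
  have hd : (0:ℝ) < ⟪b₂ - b₁, u⟫ := by
    rw [inner_sub_left]; linarith
  have hN : ‖b₁ - b₂‖ ^ 2 = ‖b₁‖ ^ 2 - 2 * ⟪b₁, b₂⟫ + ‖b₂‖ ^ 2 :=
    norm_sub_sq_real b₁ b₂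
  have hβ' : β * (2 * ⟪b₂ - b₁, u⟫) = -‖b₁ - b₂‖ ^ 2 := by
    rw [hβ]; field_simp
  have hdval : ⟪b₂ - b₁, u⟫ = β₂ - β₁ := by
    rw [inner_sub_left, hβ₁, hβ₂]
  have hts : t = s + β₁ := by
    rw [htdef, h1, inner_add_left, real_inner_smul_left, huu, hβ₁]
    ring
  have e1 : ⟪x n - (2 * t) • u, b₁⟫ = (s - 2 * t) * β₁ + ‖b₁‖ ^ 2 := by
    rw [inner_sub_left, real_inner_smul_left, h1, inner_add_left,
      real_inner_smul_left, real_inner_self_eq_norm_sq]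
    rw [hβ₁, real_inner_comm u b₁]
    ring
  have e2 : ⟪x n - (2 * t) • u, b₂⟫ = (s - 2 * t) * β₂ + ⟪b₁, b₂⟫ := by
    rw [inner_sub_left, real_inner_smul_left, h1, inner_add_left,
      real_inner_smul_left]
    rw [hβ₂, real_inner_comm u b₂]
    ring
  have key : ‖(x n - (2 * t) • u) - b₁‖ < ‖(x n - (2 * t) • u) - b₂‖ := by
    apply lt_of_pow_lt_pow_left₀ 2 (norm_nonneg _)
    have f1 : ‖(x n - (2 * t) • u) - b₁‖ ^ 2 =
        ‖x n - (2 * t) • u‖ ^ 2 - 2 * ⟪(x n - (2 * t) • u), b₁⟫ + ‖b₁‖ ^ 2 :=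
      norm_sub_sq_real _ _
    have f2 : ‖(x n - (2 * t) • u) - b₂‖ ^ 2 =
        ‖x n - (2 * t) • u‖ ^ 2 - 2 * ⟪(x n - (2 * t) • u), b₂⟫ + ‖b₂‖ ^ 2 :=
      norm_sub_sq_real _ _
    rw [f1, f2, e1, e2]
    have hpos : (0:ℝ) < β₂ - β₁ := by rw [← hdval]; exact hd
    have hkey : β * (2 * (β₂ - β₁)) < (t + β₁) * (2 * (β₂ - β₁)) := by
      apply mul_lt_mul_of_pos_right <;> linarith
    rw [hdval] at hβ'
    nlinarith [hkey, hβ', hN, hts]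
  have hstep : x (n + 1) = t • u + b₁ := (hx n).1 key
  have hinner : ⟪x (n + 1), u⟫ = t + β₁ := by
    rw [hstep, inner_add_left, real_inner_smul_left, huu, hβ₁]; ring
  refine ⟨hstep, hinner, ?_, ?_⟩
  · rw [hinner]; linarith
  · rw [hinner]; linarith
end

section
/- Let (x_n) be a DR sequence (with the tie convention) with respect to (A, B = {b_1, b_2}) and let n ≥ 1. If x_n = ⟨x_{n−1}, u⟩u + b_1 and ⟨x_n, u⟩ ∈ (β, β − β_1], then x_{n+1} = ⟨x_n, u⟩u + b_2 and ⟨x_{n+1}, u⟩ = ⟨x_n, u⟩ + β_2 ∈ (β + β_2, β − β_1 + β_2]. -/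
open Filter
open scoped RealInnerProductSpace

/-- For a DR sequence (with the tie convention choosing `b₂`) with respect to
the hyperplane `A = {u}ᗮ` and `B = {b₁, b₂}`: if `n ≥ 1`, `x n = ⟪x (n-1),u⟫ • u + b₁` and
`⟪x n, u⟫ ∈ (β, β - β₁]`, then `x (n+1) = ⟪x n,u⟫ • u + b₂` and
`⟪x (n+1), u⟫ = ⟪x n, u⟫ + β₂ ∈ (β + β₂, β - β₁ + β₂]`. -/
theorem dr_hyperplane_doubleton_stmt_12
    {X : Type*} [NormedAddCommGroup X] [InnerProductSpace ℝ X] [FiniteDimensional ℝ X]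
    (u : X) (hu : ‖u‖ = 1)
    (b₁ b₂ : X) (hb₁ : ⟪b₁, u⟫ < 0) (hb₂ : 0 < ⟪b₂, u⟫)
    (β₁ β₂ β : ℝ) (hβ₁ : β₁ = ⟪b₁, u⟫) (hβ₂ : β₂ = ⟪b₂, u⟫)
    (hβ : β = -‖b₁ - b₂‖ ^ 2 / (2 * ⟪b₂ - b₁, u⟫))
    (x : ℕ → X)
    (hx : ∀ n : ℕ,
      (‖(x n - (2 * ⟪x n, u⟫) • u) - b₁‖ < ‖(x n - (2 * ⟪x n, u⟫) • u) - b₂‖ →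
        x (n + 1) = ⟪x n, u⟫ • u + b₁) ∧
      (‖(x n - (2 * ⟪x n, u⟫) • u) - b₂‖ ≤ ‖(x n - (2 * ⟪x n, u⟫) • u) - b₁‖ →
        x (n + 1) = ⟪x n, u⟫ • u + b₂))
    (n : ℕ) (hn : 1 ≤ n)
    (h1 : x n = ⟪x (n - 1), u⟫ • u + b₁)
    (h2 : ⟪x n, u⟫ ∈ Set.Ioc β (β - β₁)) :
    x (n + 1) = ⟪x n, u⟫ • u + b₂ ∧
    ⟪x (n + 1), u⟫ = ⟪x n, u⟫ + β₂ ∧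
    ⟪x (n + 1), u⟫ ∈ Set.Ioc (β + β₂) (β - β₁ + β₂) := by

  have huu : ⟪u, u⟫ = 1 := by
    rw [real_inner_self_eq_norm_sq, hu]; norm_num
  have hb12 : ⟪b₂ - b₁, u⟫ = β₂ - β₁ := by
    rw [inner_sub_left, hβ₁, hβ₂]
  have hβdiff : 0 < β₂ - β₁ := by linarith [hβ₁ ▸ hb₁, hβ₂ ▸ hb₂]
  have hβval : β * (2 * (β₂ - β₁)) = -‖b₁ - b₂‖ ^ 2 := by
    rw [hβ, hb12, div_mul_cancel₀]
    positivity
  obtain ⟨h2l, h2r⟩ := h2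
  set t := ⟪x n, u⟫ with ht
  have hxn1 : ⟪x (n - 1), u⟫ = t - β₁ := by
    have : t = ⟪x (n - 1), u⟫ + β₁ := by
      rw [ht, h1, inner_add_left, real_inner_smul_left, huu, hβ₁]; ring
    linarith
  have hR1 : x n - (2 * t) • u - b₁ = -(((t + β₁)) • u) := by
    rw [h1, hxn1]; module
  have hR2 : x n - (2 * t) • u - b₂ = (b₁ - b₂) - (t + β₁) • u := by
    rw [h1, hxn1]; module
  have hkey : ‖x n - (2 * t) • u - b₂‖ ≤ ‖x n - (2 * t) • u - b₁‖ := by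
    rw [hR1, hR2, norm_neg]
    have e1 : ‖(b₁ - b₂) - (t + β₁) • u‖ ^ 2
        = ‖b₁ - b₂‖ ^ 2 - 2 * ((t + β₁) * ⟪b₁ - b₂, u⟫) + (t + β₁) ^ 2 := by
      rw [norm_sub_sq_real, real_inner_smul_right, norm_smul, hu]
      simp [Real.norm_eq_abs, sq_abs]
    have e2 : ‖(t + β₁) • u‖ ^ 2 = (t + β₁) ^ 2 := by
      rw [norm_smul, hu, mul_pow]
      simp [sq_abs]
    have hiu : ⟪b₁ - b₂, u⟫ = β₁ - β₂ := by rw [inner_sub_left, hβ₁, hβ₂]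
    have hsq : ‖(b₁ - b₂) - (t + β₁) • u‖ ^ 2 ≤ ‖(t + β₁) • u‖ ^ 2 := by
      rw [e1, e2, hiu]
      nlinarith [h2r, hβdiff, hβval]
    nlinarith [norm_nonneg ((b₁ - b₂) - (t + β₁) • u), norm_nonneg ((t + β₁) • u), hsq]
  have hstep := (hx n).2 hkey
  refine ⟨hstep, ?_, ?_, ?_⟩
  · rw [hstep, inner_add_left, real_inner_smul_left, huu, hβ₂]; ring
  · have : ⟪x (n + 1), u⟫ = t + β₂ := by
      rw [hstep, inner_add_left, real_inner_smul_left, huu, hβ₂]; ring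
    rw [this]; linarith
  · have : ⟪x (n + 1), u⟫ = t + β₂ := by
      rw [hstep, inner_add_left, real_inner_smul_left, huu, hβ₂]; ring
    rw [this]; linarith
end

section
/- Let (x_n) be a DR sequence (with the tie convention) with respect to (A, B = {b_1, b_2}) and let n ≥ 1. If β + β_2 ≥ 0, x_n = ⟨x_{n−1}, u⟩u + b_2 and ⟨x_n, u⟩ ∈ (β + β_2, β − β_1 + β_2], then x_{n+1} = ⟨x_n, u⟩u + b_1 and ⟨x_{n+1}, u⟩ = ⟨x_n, u⟩ + β_1 ∈ (β + β_1 + β_2, β + β_2] ⊆ (β, β + β_2]. -/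
open Filter
open scoped RealInnerProductSpace

/-- For a DR sequence (with the tie convention choosing `b₂`) with respect to
the hyperplane `A = {u}ᗮ` and `B = {b₁, b₂}`: if `β + β₂ ≥ 0`, `n ≥ 1`,
`x n = ⟪x (n-1),u⟫ • u + b₂` and `⟪x n, u⟫ ∈ (β + β₂, β - β₁ + β₂]`, then
`x (n+1) = ⟪x n,u⟫ • u + b₁` and
`⟪x (n+1), u⟫ = ⟪x n, u⟫ + β₁ ∈ (β + β₁ + β₂, β + β₂] ⊆ (β, β + β₂]`. -/
theorem dr_hyperplane_doubleton_stmt_13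
    {X : Type*} [NormedAddCommGroup X] [InnerProductSpace ℝ X] [FiniteDimensional ℝ X]
    (u : X) (hu : ‖u‖ = 1)
    (b₁ b₂ : X) (hb₁ : ⟪b₁, u⟫ < 0) (hb₂ : 0 < ⟪b₂, u⟫)
    (β₁ β₂ β : ℝ) (hβ₁ : β₁ = ⟪b₁, u⟫) (hβ₂ : β₂ = ⟪b₂, u⟫)
    (hβ : β = -‖b₁ - b₂‖ ^ 2 / (2 * ⟪b₂ - b₁, u⟫))
    (x : ℕ → X)
    (hx : ∀ n : ℕ,
      (‖(x n - (2 * ⟪x n, u⟫) • u) - b₁‖ < ‖(x n - (2 * ⟪x n, u⟫) • u) - b₂‖ →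
        x (n + 1) = ⟪x n, u⟫ • u + b₁) ∧
      (‖(x n - (2 * ⟪x n, u⟫) • u) - b₂‖ ≤ ‖(x n - (2 * ⟪x n, u⟫) • u) - b₁‖ →
        x (n + 1) = ⟪x n, u⟫ • u + b₂))
    (hββ₂ : 0 ≤ β + β₂)
    (n : ℕ) (hn : 1 ≤ n)
    (h1 : x n = ⟪x (n - 1), u⟫ • u + b₂)
    (h2 : ⟪x n, u⟫ ∈ Set.Ioc (β + β₂) (β - β₁ + β₂)) :
    x (n + 1) = ⟪x n, u⟫ • u + b₁ ∧
    ⟪x (n + 1), u⟫ = ⟪x n, u⟫ + β₁ ∧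
    ⟪x (n + 1), u⟫ ∈ Set.Ioc (β + β₁ + β₂) (β + β₂) ∧
    Set.Ioc (β + β₁ + β₂) (β + β₂) ⊆ Set.Ioc β (β + β₂) := by
  obtain ⟨h2l, h2r⟩ := h2
  have hu1 : ⟪u, u⟫ = (1 : ℝ) := by
    rw [real_inner_self_eq_norm_sq, hu]; norm_num
  set t := ⟪x n, u⟫ with ht
  have hsub : ⟪b₂ - b₁, u⟫ = β₂ - β₁ := by
    rw [inner_sub_left, hβ₁, hβ₂]
  have hβ₂₁ : 0 < β₂ - β₁ := by rw [hβ₁, hβ₂]; linarith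
  -- key algebraic fact about β
  have hβeq : ‖b₁ - b₂‖ ^ 2 = -2 * β * (β₂ - β₁) := by
    rw [hβ, hsub]
    field_simp
  -- Cauchy-Schwarz: (β₂ - β₁)^2 ≤ ‖b₁ - b₂‖^2
  have hCS : (β₂ - β₁) ^ 2 ≤ ‖b₁ - b₂‖ ^ 2 := by
    have h := abs_real_inner_le_norm (b₁ - b₂) u
    rw [hu, mul_one] at h
    have h2 : ⟪b₁ - b₂, u⟫ = β₁ - β₂ := by rw [inner_sub_left, hβ₁, hβ₂]
    calc (β₂ - β₁) ^ 2 = |⟪b₁ - b₂, u⟫| ^ 2 := by rw [h2, sq_abs]; ring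
    _ ≤ ‖b₁ - b₂‖ ^ 2 := by
        apply pow_le_pow_left₀ (abs_nonneg _) h
  have hβle : β ≤ (β₁ - β₂) / 2 := by nlinarith
  have hβ₁₂ : 0 ≤ β₁ + β₂ := by linarith
  -- s relation
  have hs : ⟪x (n - 1), u⟫ = t - β₂ := by
    have : t = ⟪x (n - 1), u⟫ + β₂ := by
      rw [ht, h1, inner_add_left, real_inner_smul_left, hu1, hβ₂]; ring
    linarith
  have hxn : x n - (2 * t) • u = b₂ - (t + β₂) • u := by
    rw [h1, hs]; module
  have hA : ‖(x n - (2 * t) • u) - b₂‖ ^ 2 = (t + β₂) ^ 2 := by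
    rw [hxn]
    have e : b₂ - (t + β₂) • u - b₂ = -((t + β₂) • u) := by module
    rw [e, norm_neg, norm_smul, hu, Real.norm_eq_abs, mul_one, sq_abs]
  have hB : ‖(x n - (2 * t) • u) - b₁‖ ^ 2
      = ‖b₂ - b₁‖ ^ 2 - 2 * (t + β₂) * (β₂ - β₁) + (t + β₂) ^ 2 := by
    have e : b₂ - (t + β₂) • u - b₁ = (b₂ - b₁) - (t + β₂) • u := by module
    rw [hxn, e, norm_sub_sq_real, real_inner_smul_right, hsub, norm_smul, hu,
      Real.norm_eq_abs, mul_one, sq_abs]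
    ring
  have hnorm : ‖b₂ - b₁‖ = ‖b₁ - b₂‖ := by rw [norm_sub_rev]
  have hlt : ‖(x n - (2 * t) • u) - b₁‖ < ‖(x n - (2 * t) • u) - b₂‖ := by
    have hsq : ‖(x n - (2 * t) • u) - b₁‖ ^ 2 < ‖(x n - (2 * t) • u) - b₂‖ ^ 2 := by
      rw [hA, hB, hnorm, hβeq]
      nlinarith
    exact lt_of_pow_lt_pow_left₀ 2 (norm_nonneg _) hsq
  have hstep : x (n + 1) = t • u + b₁ := (hx n).1 hlt
  have hinner : ⟪x (n + 1), u⟫ = t + β₁ := by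
    rw [hstep, inner_add_left, real_inner_smul_left, hu1, hβ₁]; ring
  refine ⟨hstep, hinner, ?_, ?_⟩
  · rw [hinner]
    constructor <;> linarith
  · intro y hy
    exact ⟨by linarith [hy.1], hy.2⟩
end

section
/- Let (x_n) be a DR sequence (with the tie convention) with respect to (A, B = {b_1, b_2}) and suppose β + β_2 ≥ 0. If for some n ≥ 1 the iterate x_n satisfies either (x_n = ⟨x_{n−1}, u⟩u + b_1 and ⟨x_n, u⟩ ∈ (β, β + β_2]) or (x_n = ⟨x_{n−1}, u⟩u + b_2 and ⟨x_n, u⟩ ∈ (β + β_2, β − β_1 + β_2]), then x_{n+1} satisfies either (x_{n+1} = ⟨x_n, u⟩u + b_1 and ⟨x_{n+1}, u⟩ ∈ (β, β + β_2]) or (x_{n+1} = ⟨x_n, u⟩u + b_2 and ⟨x_{n+1}, u⟩ ∈ (β + β_2, β − β_1 + β_2]). -/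
open Filter
open scoped RealInnerProductSpace

private lemma aux_case2 (s t β β₁ β₂ : ℝ) (hpos : 0 < β₂ - β₁) (hts : t = s + β₂)
    (htlo : β + β₂ < t) (hββ₂ : 0 ≤ β + β₂) :
    (s - 2*t)^2 + 2*((s-2*t)*(β₂-β₁)) + (-2*β*(β₂-β₁)) < (s-2*t)^2 := by
  nlinarith [mul_pos hpos (show (0:ℝ) < t + β₂ + β by linarith)]

/-- For a DR sequence (with the tie convention choosing `b₂`) with respect to
the hyperplane `A = {u}ᗮ` and `B = {b₁, b₂}`: if `β + β₂ ≥ 0` and, for some `n ≥ 1`,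
`x n` lies in `S₁ ∪ S₂`, then so does `x (n+1)`. -/
theorem dr_hyperplane_doubleton_stmt_14
    {X : Type*} [NormedAddCommGroup X] [InnerProductSpace ℝ X] [FiniteDimensional ℝ X]
    (u : X) (hu : ‖u‖ = 1)
    (b₁ b₂ : X) (hb₁ : ⟪b₁, u⟫ < 0) (hb₂ : 0 < ⟪b₂, u⟫)
    (β₁ β₂ β : ℝ) (hβ₁ : β₁ = ⟪b₁, u⟫) (hβ₂ : β₂ = ⟪b₂, u⟫)
    (hβ : β = -‖b₁ - b₂‖ ^ 2 / (2 * ⟪b₂ - b₁, u⟫))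
    (x : ℕ → X)
    (hx : ∀ n : ℕ,
      (‖(x n - (2 * ⟪x n, u⟫) • u) - b₁‖ < ‖(x n - (2 * ⟪x n, u⟫) • u) - b₂‖ →
        x (n + 1) = ⟪x n, u⟫ • u + b₁) ∧
      (‖(x n - (2 * ⟪x n, u⟫) • u) - b₂‖ ≤ ‖(x n - (2 * ⟪x n, u⟫) • u) - b₁‖ →
        x (n + 1) = ⟪x n, u⟫ • u + b₂))
    (hββ₂ : 0 ≤ β + β₂)
    (n : ℕ) (hn : 1 ≤ n)
    (hS : (x n = ⟪x (n - 1), u⟫ • u + b₁ ∧ ⟪x n, u⟫ ∈ Set.Ioc β (β + β₂)) ∨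
      (x n = ⟪x (n - 1), u⟫ • u + b₂ ∧ ⟪x n, u⟫ ∈ Set.Ioc (β + β₂) (β - β₁ + β₂))) :
    (x (n + 1) = ⟪x n, u⟫ • u + b₁ ∧ ⟪x (n + 1), u⟫ ∈ Set.Ioc β (β + β₂)) ∨
    (x (n + 1) = ⟪x n, u⟫ • u + b₂ ∧
      ⟪x (n + 1), u⟫ ∈ Set.Ioc (β + β₂) (β - β₁ + β₂)) := by
  have huu : ⟪u, u⟫ = (1 : ℝ) := by
    rw [real_inner_self_eq_norm_sq, hu]; norm_num
  set t : ℝ := ⟪x n, u⟫ with ht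
  set s : ℝ := ⟪x (n - 1), u⟫ with hs
  have hd : ⟪b₂ - b₁, u⟫ = β₂ - β₁ := by rw [inner_sub_left, hβ₁, hβ₂]
  have hpos : 0 < β₂ - β₁ := by linarith [hβ₁ ▸ hb₁, hβ₂ ▸ hb₂]
  have hbb : ‖b₁ - b₂‖ ^ 2 = -2 * β * (β₂ - β₁) := by
    rw [hd] at hβ
    field_simp at hβ
    linarith
  have hub : ⟪u, b₁ - b₂⟫ = β₁ - β₂ := by
    rw [real_inner_comm, inner_sub_left, hβ₁, hβ₂]
  have hub' : ⟪u, b₂ - b₁⟫ = β₂ - β₁ := by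
    rw [real_inner_comm, hd]
  have hcs : (β₂ - β₁) ^ 2 ≤ ‖b₁ - b₂‖ ^ 2 := by
    have h1 : |⟪b₂ - b₁, u⟫| ≤ ‖b₂ - b₁‖ * ‖u‖ := abs_real_inner_le_norm _ _
    rw [hd, hu, mul_one] at h1
    have h2 : ‖b₂ - b₁‖ = ‖b₁ - b₂‖ := norm_sub_rev _ _
    nlinarith [abs_nonneg (β₂ - β₁), sq_abs (β₂ - β₁), norm_nonneg (b₁ - b₂)]
  have hsum : 0 ≤ β₁ + β₂ := by nlinarith
  rcases hS with ⟨hx1, htlo, hthi⟩ | ⟨hx2, htlo, hthi⟩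
  · -- x n = s • u + b₁
    have hts : t = s + β₁ := by
      rw [ht, hx1, inner_add_left, real_inner_smul_left, huu, hβ₁]; ring
    have hR1 : x n - (2 * t) • u - b₁ = (s - 2 * t) • u := by
      rw [hx1]; module
    have hR2 : x n - (2 * t) • u - b₂ = (s - 2 * t) • u + (b₁ - b₂) := by
      rw [hx1]; module
    have hn1 : ‖(s - 2 * t) • u‖ ^ 2 = (s - 2 * t) ^ 2 := by
      rw [norm_smul, hu, mul_one, Real.norm_eq_abs, sq_abs]
    have hn2 : ‖(s - 2 * t) • u + (b₁ - b₂)‖ ^ 2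
        = (s - 2 * t) ^ 2 + 2 * ((s - 2 * t) * (β₁ - β₂)) + ‖b₁ - b₂‖ ^ 2 := by
      rw [@norm_add_sq_real, hn1, real_inner_smul_left, hub]
    rcases le_or_gt t (β - β₁) with hle | hgt
    · -- choose b₂
      have hkey : ‖x n - (2 * t) • u - b₂‖ ≤ ‖x n - (2 * t) • u - b₁‖ := by
        apply le_of_pow_le_pow_left₀ two_ne_zero (norm_nonneg _)
        rw [hR1, hR2, hn1, hn2]
        nlinarith
      have hstep := (hx n).2 hkey
      right
      refine ⟨hstep, ?_, ?_⟩
      · rw [hstep, inner_add_left, real_inner_smul_left, huu, ← hβ₂]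
        simp only [mul_one]
        linarith
      · rw [hstep, inner_add_left, real_inner_smul_left, huu, ← hβ₂]
        simp only [mul_one]
        linarith
    · -- choose b₁
      have hkey : ‖x n - (2 * t) • u - b₁‖ < ‖x n - (2 * t) • u - b₂‖ := by
        apply lt_of_pow_lt_pow_left₀ 2 (norm_nonneg _)
        rw [hR1, hR2, hn1, hn2]
        nlinarith
      have hstep := (hx n).1 hkey
      left
      refine ⟨hstep, ?_, ?_⟩
      · rw [hstep, inner_add_left, real_inner_smul_left, huu, ← hβ₁]
        simp only [mul_one]
        linarith
      · rw [hstep, inner_add_left, real_inner_smul_left, huu, ← hβ₁]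
        simp only [mul_one]
        linarith [hβ₁ ▸ hb₁]
  · -- x n = s • u + b₂
    have hts : t = s + β₂ := by
      rw [ht, hx2, inner_add_left, real_inner_smul_left, huu, hβ₂]; ring
    have hR2 : x n - (2 * t) • u - b₂ = (s - 2 * t) • u := by
      rw [hx2]; module
    have hR1 : x n - (2 * t) • u - b₁ = (s - 2 * t) • u + (b₂ - b₁) := by
      rw [hx2]; module
    have hn1 : ‖(s - 2 * t) • u‖ ^ 2 = (s - 2 * t) ^ 2 := by
      rw [norm_smul, hu, mul_one, Real.norm_eq_abs, sq_abs]
    have hn2 : ‖(s - 2 * t) • u + (b₂ - b₁)‖ ^ 2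
        = (s - 2 * t) ^ 2 + 2 * ((s - 2 * t) * (β₂ - β₁)) + ‖b₁ - b₂‖ ^ 2 := by
      rw [@norm_add_sq_real, hn1, real_inner_smul_left, hub', norm_sub_rev b₂ b₁]
    have hkey : ‖x n - (2 * t) • u - b₁‖ < ‖x n - (2 * t) • u - b₂‖ := by
      apply lt_of_pow_lt_pow_left₀ 2 (norm_nonneg _)
      rw [hR1, hR2, hn1, hn2, hbb]
      exact aux_case2 s t β β₁ β₂ hpos hts htlo hββ₂
    have hstep := (hx n).1 hkey
    left
    refine ⟨hstep, ?_, ?_⟩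
    · rw [hstep, inner_add_left, real_inner_smul_left, huu, ← hβ₁]
      simp only [mul_one]
      linarith
    · rw [hstep, inner_add_left, real_inner_smul_left, huu, ← hβ₁]
      simp only [mul_one]
      linarith
end

section
/- Let (x_n) be a DR sequence (with the tie convention) with respect to (A, B = {b_1, b_2}). Suppose β + β_2 ≥ 0 and x_1 satisfies either (x_1 = ⟨x_0, u⟩u + b_1 and ⟨x_1, u⟩ ∈ (β, β + β_2]) or (x_1 = ⟨x_0, u⟩u + b_2 and ⟨x_1, u⟩ ∈ (β + β_2, β − β_1 + β_2]). Then for every n ≥ 1: ⟨x_n, u⟩ = ⟨x_0, u⟩ + n·β_1 + ⌊(−⟨x_0, u⟩ + β − (n+1)β_1 + β_2)/(β_2 − β_1)⌋·(β_2 − β_1), and x_n = ⟨x_{n−1}, u⟩u + b_{k(n)}, where k(n) = ⌊(−⟨x_0, u⟩ + β − (n+1)β_1 + β_2)/(β_2 − β_1)⌋ − ⌊(−⟨x_0, u⟩ + β − n·β_1 + β_2)/(β_2 − β_1)⌋ + 1 ∈ {1, 2}. -/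
open scoped RealInnerProductSpace

/-! For `n ≥ 1` the iterate has the form `x n = η • u + b` with `b ∈ B`; its reflection in
`{u}ᗮ` is then `b - (ξ + ⟪b, u⟫) • u` with `ξ = ⟪x n, u⟫`, so the nearer point of `B` depends
only on `ξ` and on `b`. Writing `‖b₁ - b₂‖² = -2 (β₂ - β₁) β`, the comparison becomes
`ξ > β - β₁` after a `b₁`-step and `ξ > -β - β₂` after a `b₂`-step, and under `β + β₂ ≥ 0`
both reduce to the single rule "add `β₁` if `ξ > β - β₁`, else add `β₂`". This rule keeps `ξ` in
the window `(β, β - β₁ + β₂]` of length `β₂ - β₁`, so `ξ n` is the representative in that window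
of `ξ 0 + n β₁` modulo `β₂ - β₁`, which is what the floor formula computes. -/

section Rotation

variable {β₁ β₂ β : ℝ} {ξ : ℕ → ℝ}

lemma add_ite_mem_Ioc (h₁ : β₁ ≤ 0) (h₂ : 0 ≤ β₂) {t : ℝ} (ht : t ∈ Set.Ioc β (β - β₁ + β₂)) :
    t + (if β - β₁ < t then β₁ else β₂) ∈ Set.Ioc β (β - β₁ + β₂) := by
  obtain ⟨hlo, hhi⟩ := ht
  split_ifs <;> constructor <;> linarith

lemma floor_div_eq_of_add_mul_mem_Ioc {a c D : ℝ} {m : ℤ} (hD : 0 < D)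
    (h : a + m * D ∈ Set.Ioc (c - D) c) : ⌊(c - a) / D⌋ = m := by
  obtain ⟨hlo, hhi⟩ := h
  rw [Int.floor_eq_iff, le_div_iff₀ hD, div_lt_iff₀ hD]
  constructor <;> linarith

lemma exists_int_eq_add_mul (hstep : ∀ n, ξ (n + 1) = ξ n + β₁ ∨ ξ (n + 1) = ξ n + β₂) :
    ∀ n : ℕ, ∃ m : ℤ, ξ n = ξ 0 + n * β₁ + m * (β₂ - β₁)
  | 0 => ⟨0, by simp⟩
  | n + 1 => by
    obtain ⟨m, hm⟩ := exists_int_eq_add_mul hstep n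
    rcases hstep n with h | h
    · exact ⟨m, by rw [h, hm]; push_cast; ring⟩
    · exact ⟨m + 1, by rw [h, hm]; push_cast; ring⟩

lemma eq_add_floor_mul (hβ₁₂ : β₁ < β₂) (hW : ∀ n, ξ n ∈ Set.Ioc β (β - β₁ + β₂))
    (hstep : ∀ n, ξ (n + 1) = ξ n + if β - β₁ < ξ n then β₁ else β₂) (n : ℕ) :
    ξ n = ξ 0 + n * β₁ +
      ⌊(-ξ 0 + β - ((n : ℝ) + 1) * β₁ + β₂) / (β₂ - β₁)⌋ * (β₂ - β₁) := by
  obtain ⟨m, hm⟩ := exists_int_eq_add_mul (ξ := ξ) (β₁ := β₁) (β₂ := β₂)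
    (fun k => by rw [hstep k]; split_ifs <;> simp) n
  have hfloor : ⌊(β - β₁ + β₂ - (ξ 0 + n * β₁)) / (β₂ - β₁)⌋ = m :=
    floor_div_eq_of_add_mul_mem_Ioc (sub_pos.2 hβ₁₂) (by rw [← hm]; convert hW n using 2; ring)
  rw [← hfloor] at hm
  convert hm using 6
  ring

lemma floor_succ_sub_floor (hβ₁₂ : β₁ < β₂) (hW : ∀ n, ξ n ∈ Set.Ioc β (β - β₁ + β₂))
    (hstep : ∀ n, ξ (n + 1) = ξ n + if β - β₁ < ξ n then β₁ else β₂) (n : ℕ) :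
    ⌊(-ξ 0 + β - ((n : ℝ) + 1 + 1) * β₁ + β₂) / (β₂ - β₁)⌋ -
        ⌊(-ξ 0 + β - ((n : ℝ) + 1) * β₁ + β₂) / (β₂ - β₁)⌋ =
      if β - β₁ < ξ n then 0 else 1 := by
  have hn := eq_add_floor_mul hβ₁₂ hW hstep n
  have hn₁ := eq_add_floor_mul hβ₁₂ hW hstep (n + 1)
  push_cast at hn₁
  have key : ((⌊(-ξ 0 + β - ((n : ℝ) + 1 + 1) * β₁ + β₂) / (β₂ - β₁)⌋ -
        ⌊(-ξ 0 + β - ((n : ℝ) + 1) * β₁ + β₂) / (β₂ - β₁)⌋ : ℤ) : ℝ) * (β₂ - β₁) =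
      (if β - β₁ < ξ n then β₁ else β₂) - β₁ := by
    push_cast
    linear_combination hstep n - hn₁ + hn
  have hD : β₂ - β₁ ≠ 0 := (sub_pos.2 hβ₁₂).ne'
  split_ifs at key ⊢
  · exact_mod_cast mul_right_cancel₀ hD (key.trans (by ring : β₁ - β₁ = (0 : ℝ) * (β₂ - β₁)))
  · exact_mod_cast mul_right_cancel₀ hD (key.trans (one_mul _).symm)

end Rotation

section DouglasRachford

variable {X : Type*} [NormedAddCommGroup X] [InnerProductSpace ℝ X] {u b₁ b₂ : X} {x : ℕ → X}
  {β : ℝ}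

def IsDRSequence (u b₁ b₂ : X) (x : ℕ → X) : Prop :=
  ∀ n : ℕ,
    (‖(x n - (2 * ⟪x n, u⟫) • u) - b₁‖ < ‖(x n - (2 * ⟪x n, u⟫) • u) - b₂‖ →
      x (n + 1) = ⟪x n, u⟫ • u + b₁) ∧
    (‖(x n - (2 * ⟪x n, u⟫) • u) - b₂‖ ≤ ‖(x n - (2 * ⟪x n, u⟫) • u) - b₁‖ →
      x (n + 1) = ⟪x n, u⟫ • u + b₂)

lemma inner_smul_add_left_of_norm_eq_one (hu : ‖u‖ = 1) (η : ℝ) (b : X) :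
    ⟪η • u + b, u⟫ = η + ⟪b, u⟫ := by
  rw [inner_add_left, real_inner_smul_left, real_inner_self_eq_norm_sq, hu, one_pow, mul_one]

lemma norm_sub_smul_sub_sq (hu : ‖u‖ = 1) (b c : X) (t : ℝ) :
    ‖b - t • u - c‖ ^ 2 = ‖b - c‖ ^ 2 - 2 * t * ⟪b - c, u⟫ + t ^ 2 := by
  rw [sub_right_comm, norm_sub_sq_real, real_inner_smul_right, norm_smul, hu, mul_one,
    Real.norm_eq_abs, sq_abs]
  ring

lemma IsDRSequence.succ_eq_of_eq_smul_add (hx : IsDRSequence u b₁ b₂ x) (hu : ‖u‖ = 1)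
    {n : ℕ} {η : ℝ} {b : X} (hn : x n = η • u + b) :
    x (n + 1) = ⟪x n, u⟫ • u + if 0 < ‖b - b₂‖ ^ 2 - ‖b - b₁‖ ^ 2 +
      2 * (⟪x n, u⟫ + ⟪b, u⟫) * ⟪b₂ - b₁, u⟫ then b₁ else b₂ := by
  have hξ : ⟪x n, u⟫ = η + ⟪b, u⟫ := by rw [hn, inner_smul_add_left_of_norm_eq_one hu]
  have hrefl : x n - (2 * ⟪x n, u⟫) • u = b - (⟪x n, u⟫ + ⟪b, u⟫) • u := by
    rw [hξ, hn]; module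
  have hdiff : ‖(x n - (2 * ⟪x n, u⟫) • u) - b₂‖ ^ 2 - ‖(x n - (2 * ⟪x n, u⟫) • u) - b₁‖ ^ 2 =
      ‖b - b₂‖ ^ 2 - ‖b - b₁‖ ^ 2 + 2 * (⟪x n, u⟫ + ⟪b, u⟫) * ⟪b₂ - b₁, u⟫ := by
    rw [hrefl, norm_sub_smul_sub_sq hu, norm_sub_smul_sub_sq hu]
    simp only [inner_sub_left]
    ring
  split_ifs with h
  · exact (hx n).1 (pow_lt_pow_iff_left₀ (norm_nonneg _) (norm_nonneg _) two_ne_zero |>.1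
      (by linarith))
  · exact (hx n).2 (pow_le_pow_iff_left₀ (norm_nonneg _) (norm_nonneg _) two_ne_zero |>.1
      (by linarith))

lemma IsDRSequence.succ_eq_of_eq_smul_add_left (hx : IsDRSequence u b₁ b₂ x) (hu : ‖u‖ = 1)
    (hβ : ‖b₁ - b₂‖ ^ 2 = -(2 * ⟪b₂ - b₁, u⟫ * β)) (hD : 0 < ⟪b₂ - b₁, u⟫)
    {n : ℕ} {η : ℝ} (hn : x n = η • u + b₁) :
    x (n + 1) = ⟪x n, u⟫ • u + if β - ⟪b₁, u⟫ < ⟪x n, u⟫ then b₁ else b₂ := by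
  have hcond : 0 < ‖b₁ - b₂‖ ^ 2 - ‖b₁ - b₁‖ ^ 2 + 2 * (⟪x n, u⟫ + ⟪b₁, u⟫) * ⟪b₂ - b₁, u⟫ ↔
      β - ⟪b₁, u⟫ < ⟪x n, u⟫ := by
    have hexpand : ‖b₁ - b₂‖ ^ 2 - ‖b₁ - b₁‖ ^ 2 + 2 * (⟪x n, u⟫ + ⟪b₁, u⟫) * ⟪b₂ - b₁, u⟫ =
        2 * ⟪b₂ - b₁, u⟫ * (⟪x n, u⟫ - (β - ⟪b₁, u⟫)) := by
      rw [sub_self, norm_zero, hβ]; ring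
    rw [hexpand, mul_pos_iff_of_pos_left (mul_pos two_pos hD), sub_pos]
  rw [hx.succ_eq_of_eq_smul_add hu hn]
  simp only [hcond]

lemma IsDRSequence.succ_eq_of_eq_smul_add_right (hx : IsDRSequence u b₁ b₂ x) (hu : ‖u‖ = 1)
    (hβ : ‖b₁ - b₂‖ ^ 2 = -(2 * ⟪b₂ - b₁, u⟫ * β)) (hD : 0 < ⟪b₂ - b₁, u⟫)
    {n : ℕ} {η : ℝ} (hn : x n = η • u + b₂) (hξ : -β - ⟪b₂, u⟫ < ⟪x n, u⟫) :
    x (n + 1) = ⟪x n, u⟫ • u + b₁ := by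
  rw [hx.succ_eq_of_eq_smul_add hu hn, if_pos]
  rw [sub_self, norm_zero, norm_sub_rev, hβ]
  nlinarith

-- Cauchy–Schwarz gives `2β ≤ β₁ - β₂`, which with `β + β₂ ≥ 0` yields `β₁ + β₂ ≥ 0`.
lemma inner_add_inner_nonneg (hu : ‖u‖ = 1) (hβ : ‖b₁ - b₂‖ ^ 2 = -(2 * ⟪b₂ - b₁, u⟫ * β))
    (hD : 0 < ⟪b₂ - b₁, u⟫) (hββ₂ : 0 ≤ β + ⟪b₂, u⟫) : 0 ≤ ⟪b₁, u⟫ + ⟪b₂, u⟫ := by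
  have hCS : ⟪b₂ - b₁, u⟫ ≤ ‖b₁ - b₂‖ := by
    simpa [hu, norm_sub_rev] using real_inner_le_norm (b₂ - b₁) u
  have h2β : 2 * β ≤ -⟪b₂ - b₁, u⟫ := by nlinarith
  rw [inner_sub_left] at h2β
  linarith

lemma IsDRSequence.inner_mem_Ioc_and_succ_eq (hx : IsDRSequence u b₁ b₂ x) (hu : ‖u‖ = 1)
    (hb₁ : ⟪b₁, u⟫ < 0) (hb₂ : 0 < ⟪b₂, u⟫)
    (hβ : β = -‖b₁ - b₂‖ ^ 2 / (2 * ⟪b₂ - b₁, u⟫)) (hββ₂ : 0 ≤ β + ⟪b₂, u⟫)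
    (hx1 : (x 1 = ⟪x 0, u⟫ • u + b₁ ∧ ⟪x 1, u⟫ ∈ Set.Ioc β (β + ⟪b₂, u⟫)) ∨
      (x 1 = ⟪x 0, u⟫ • u + b₂ ∧
        ⟪x 1, u⟫ ∈ Set.Ioc (β + ⟪b₂, u⟫) (β - ⟪b₁, u⟫ + ⟪b₂, u⟫))) (n : ℕ) :
    ⟪x n, u⟫ ∈ Set.Ioc β (β - ⟪b₁, u⟫ + ⟪b₂, u⟫) ∧
      x (n + 1) = ⟪x n, u⟫ • u + if β - ⟪b₁, u⟫ < ⟪x n, u⟫ then b₁ else b₂ := by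
  have hD : 0 < ⟪b₂ - b₁, u⟫ := by rw [inner_sub_left]; linarith
  have hβ' : ‖b₁ - b₂‖ ^ 2 = -(2 * ⟪b₂ - b₁, u⟫ * β) := by rw [hβ]; field_simp
  have hsum := inner_add_inner_nonneg hu hβ' hD hββ₂
  induction n with
  | zero =>
    rcases hx1 with ⟨h1, hlo, hhi⟩ | ⟨h1, hlo, hhi⟩
    · rw [h1, inner_smul_add_left_of_norm_eq_one hu] at hlo hhi
      exact ⟨⟨by linarith, by linarith⟩, by rw [if_pos (by linarith)]; exact h1⟩
    · rw [h1, inner_smul_add_left_of_norm_eq_one hu] at hlo hhi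
      exact ⟨⟨by linarith, by linarith⟩, by rw [if_neg (by linarith)]; exact h1⟩
  | succ n ih =>
    obtain ⟨hW, hnext⟩ := ih
    have hξ : ⟪x (n + 1), u⟫ =
        ⟪x n, u⟫ + if β - ⟪b₁, u⟫ < ⟪x n, u⟫ then ⟪b₁, u⟫ else ⟪b₂, u⟫ := by
      rw [hnext, inner_smul_add_left_of_norm_eq_one hu, apply_ite (inner ℝ · u)]
    refine ⟨hξ ▸ add_ite_mem_Ioc hb₁.le hb₂.le hW, ?_⟩
    split_ifs at hnext hξ
    · exact hx.succ_eq_of_eq_smul_add_left hu hβ' hD hnext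
    · rw [if_pos (by linarith [hW.1])]
      exact hx.succ_eq_of_eq_smul_add_right hu hβ' hD hnext (by linarith [hW.1])

end DouglasRachford

theorem dr_hyperplane_doubleton_stmt_15_general
    {X : Type*} [NormedAddCommGroup X] [InnerProductSpace ℝ X]
    (u : X) (hu : ‖u‖ = 1)
    (b₁ b₂ : X) (hb₁ : ⟪b₁, u⟫ < 0) (hb₂ : 0 < ⟪b₂, u⟫)
    (β₁ β₂ β : ℝ) (hβ₁ : β₁ = ⟪b₁, u⟫) (hβ₂ : β₂ = ⟪b₂, u⟫)
    (hβ : β = -‖b₁ - b₂‖ ^ 2 / (2 * ⟪b₂ - b₁, u⟫))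
    (x : ℕ → X)
    (hx : ∀ n : ℕ,
      (‖(x n - (2 * ⟪x n, u⟫) • u) - b₁‖ < ‖(x n - (2 * ⟪x n, u⟫) • u) - b₂‖ →
        x (n + 1) = ⟪x n, u⟫ • u + b₁) ∧
      (‖(x n - (2 * ⟪x n, u⟫) • u) - b₂‖ ≤ ‖(x n - (2 * ⟪x n, u⟫) • u) - b₁‖ →
        x (n + 1) = ⟪x n, u⟫ • u + b₂))
    (hββ₂ : 0 ≤ β + β₂)
    (hx1 : (x 1 = ⟪x 0, u⟫ • u + b₁ ∧ ⟪x 1, u⟫ ∈ Set.Ioc β (β + β₂)) ∨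
      (x 1 = ⟪x 0, u⟫ • u + b₂ ∧ ⟪x 1, u⟫ ∈ Set.Ioc (β + β₂) (β - β₁ + β₂))) :
    ∀ n : ℕ, 1 ≤ n →
      ⟪x n, u⟫ = ⟪x 0, u⟫ + (n : ℝ) * β₁ +
        (⌊(-⟪x 0, u⟫ + β - ((n : ℝ) + 1) * β₁ + β₂) / (β₂ - β₁)⌋ : ℝ) * (β₂ - β₁) ∧
      ∃ k : ℤ,
        k = ⌊(-⟪x 0, u⟫ + β - ((n : ℝ) + 1) * β₁ + β₂) / (β₂ - β₁)⌋ -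
            ⌊(-⟪x 0, u⟫ + β - (n : ℝ) * β₁ + β₂) / (β₂ - β₁)⌋ + 1 ∧
        (k = 1 ∨ k = 2) ∧
        x n = ⟪x (n - 1), u⟫ • u + (if k = 1 then b₁ else b₂) := by
  subst hβ₁ hβ₂
  have hinv := IsDRSequence.inner_mem_Ioc_and_succ_eq hx hu hb₁ hb₂ hβ hββ₂ hx1
  have hW (n : ℕ) := (hinv n).1
  have hstep (n : ℕ) : ⟪x (n + 1), u⟫ =
      ⟪x n, u⟫ + if β - ⟪b₁, u⟫ < ⟪x n, u⟫ then ⟪b₁, u⟫ else ⟪b₂, u⟫ := by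
    rw [(hinv n).2, inner_smul_add_left_of_norm_eq_one hu, apply_ite (inner ℝ · u)]
  have hβ₁₂ : ⟪b₁, u⟫ < ⟪b₂, u⟫ := hb₁.trans hb₂
  intro n hn
  obtain ⟨m, rfl⟩ := Nat.exists_eq_add_of_le' hn
  refine ⟨eq_add_floor_mul (ξ := fun n => ⟪x n, u⟫) hβ₁₂ hW hstep _, _, rfl, ?_⟩
  push_cast
  rw [floor_succ_sub_floor (ξ := fun n => ⟪x n, u⟫) hβ₁₂ hW hstep m, (hinv m).2]
  by_cases h : β - ⟪b₁, u⟫ < ⟪x m, u⟫ <;> simp [h]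

/-- closed-form expressions: For a DR sequence (with the tie convention
choosing `b₂`) with respect to the hyperplane `A = {u}ᗮ` and `B = {b₁, b₂}`, if
`β + β₂ ≥ 0` and `x 1 ∈ S₁ ∪ S₂`, then for all `n ≥ 1`:
`⟪x n, u⟫ = ⟪x 0, u⟫ + n β₁ + ⌊(-⟪x 0,u⟫ + β - (n+1)β₁ + β₂)/(β₂ - β₁)⌋ (β₂ - β₁)` and
`x n = ⟪x (n-1), u⟫ • u + b_{k(n)}` with
`k(n) = ⌊(-⟪x 0,u⟫ + β - (n+1)β₁ + β₂)/(β₂-β₁)⌋ - ⌊(-⟪x 0,u⟫ + β - nβ₁ + β₂)/(β₂-β₁)⌋ + 1`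
belonging to `{1, 2}`. -/
theorem dr_hyperplane_doubleton_stmt_15
    {X : Type*} [NormedAddCommGroup X] [InnerProductSpace ℝ X] [FiniteDimensional ℝ X]
    (u : X) (hu : ‖u‖ = 1)
    (b₁ b₂ : X) (hb₁ : ⟪b₁, u⟫ < 0) (hb₂ : 0 < ⟪b₂, u⟫)
    (β₁ β₂ β : ℝ) (hβ₁ : β₁ = ⟪b₁, u⟫) (hβ₂ : β₂ = ⟪b₂, u⟫)
    (hβ : β = -‖b₁ - b₂‖ ^ 2 / (2 * ⟪b₂ - b₁, u⟫))
    (x : ℕ → X)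
    (hx : ∀ n : ℕ,
      (‖(x n - (2 * ⟪x n, u⟫) • u) - b₁‖ < ‖(x n - (2 * ⟪x n, u⟫) • u) - b₂‖ →
        x (n + 1) = ⟪x n, u⟫ • u + b₁) ∧
      (‖(x n - (2 * ⟪x n, u⟫) • u) - b₂‖ ≤ ‖(x n - (2 * ⟪x n, u⟫) • u) - b₁‖ →
        x (n + 1) = ⟪x n, u⟫ • u + b₂))
    (hββ₂ : 0 ≤ β + β₂)
    (hx1 : (x 1 = ⟪x 0, u⟫ • u + b₁ ∧ ⟪x 1, u⟫ ∈ Set.Ioc β (β + β₂)) ∨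
      (x 1 = ⟪x 0, u⟫ • u + b₂ ∧ ⟪x 1, u⟫ ∈ Set.Ioc (β + β₂) (β - β₁ + β₂))) :
    ∀ n : ℕ, 1 ≤ n →
      ⟪x n, u⟫ = ⟪x 0, u⟫ + (n : ℝ) * β₁ +
        (⌊(-⟪x 0, u⟫ + β - ((n : ℝ) + 1) * β₁ + β₂) / (β₂ - β₁)⌋ : ℝ) * (β₂ - β₁) ∧
      ∃ k : ℤ,
        k = ⌊(-⟪x 0, u⟫ + β - ((n : ℝ) + 1) * β₁ + β₂) / (β₂ - β₁)⌋ -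
            ⌊(-⟪x 0, u⟫ + β - (n : ℝ) * β₁ + β₂) / (β₂ - β₁)⌋ + 1 ∧
        (k = 1 ∨ k = 2) ∧
        x n = ⟪x (n - 1), u⟫ • u + (if k = 1 then b₁ else b₂) :=
  dr_hyperplane_doubleton_stmt_15_general u hu b₁ b₂ hb₁ hb₂ β₁ β₂ β hβ₁ hβ₂ hβ x hx hββ₂ hx1
end

section
/- Let (x_n) be a DR sequence (with the tie convention) with respect to (A, B = {b_1, b_2}). Suppose β_1 > β ≥ −β_2, ⟨x_0, u⟩ = 0 (i.e., x_0 ∈ A), and 2⟨x_0, b_1 − b_2⟩ > ‖b_1‖² − ‖b_2‖². Then for all n ∈ ℕ: ⟨x_n, u⟩ = n·β_1 + ⌊(β − (n+1)β_1 + β_2)/(β_2 − β_1)⌋·(β_2 − β_1); and for all n ≥ 1: x_n = ((n−1)β_1 + ⌊(β − n·β_1 + β_2)/(β_2 − β_1)⌋·(β_2 − β_1))·u + b_{k(n)}, where k(n) = ⌊(β − (n+1)β_1 + β_2)/(β_2 − β_1)⌋ − ⌊(β − n·β_1 + β_2)/(β_2 − β_1)⌋ + 1 ∈ {1, 2}.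 -/
open Filter
open scoped RealInnerProductSpace

private noncomputable def drG (β β₁ β₂ : ℝ) (n : ℕ) : ℤ :=
  ⌊(β - ((n : ℝ) + 1) * β₁ + β₂) / (β₂ - β₁)⌋

private noncomputable def drA (β β₁ β₂ : ℝ) (n : ℕ) : ℝ :=
  (n : ℝ) * β₁ + (drG β β₁ β₂ n : ℝ) * (β₂ - β₁)

private lemma drA_gt {β β₁ β₂ : ℝ} (hd : 0 < β₂ - β₁) (n : ℕ) : β < drA β β₁ β₂ n := by
  have h1 : (β - ((n : ℝ) + 1) * β₁ + β₂) / (β₂ - β₁) - 1 < ((drG β β₁ β₂ n : ℤ) : ℝ) :=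
    Int.sub_one_lt_floor _
  have h2 := mul_lt_mul_of_pos_right h1 hd
  rw [sub_mul, one_mul, div_mul_cancel₀ _ (ne_of_gt hd)] at h2
  have e : ((n : ℝ) + 1) * β₁ = (n : ℝ) * β₁ + β₁ := by ring
  rw [e] at h2
  unfold drA
  linarith

private lemma drG_mono {β β₁ β₂ : ℝ} (hd : 0 < β₂ - β₁) (hβ₁0 : β₁ < 0) (n : ℕ) :
    drG β β₁ β₂ n ≤ drG β β₁ β₂ (n + 1) := by
  apply Int.floor_le_floor
  apply (div_le_div_iff_of_pos_right hd).mpr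
  push_cast
  nlinarith

private lemma drG_succ_le {β β₁ β₂ : ℝ} (hd : 0 < β₂ - β₁) (hβ₂0 : 0 < β₂) (n : ℕ) :
    drG β β₁ β₂ (n + 1) ≤ drG β β₁ β₂ n + 1 := by
  have h1 : (β - ((n : ℝ) + 1) * β₁ + β₂) / (β₂ - β₁) < ((drG β β₁ β₂ n : ℤ) : ℝ) + 1 :=
    Int.lt_floor_add_one _
  have h2 := mul_lt_mul_of_pos_right h1 hd
  rw [div_mul_cancel₀ _ (ne_of_gt hd)] at h2
  have h3 : drG β β₁ β₂ (n + 1) < drG β β₁ β₂ n + 2 := by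
    apply Int.floor_lt.mpr
    push_cast
    rw [div_lt_iff₀ hd]
    nlinarith
  omega

private lemma drG_succ_iff {β β₁ β₂ : ℝ} (hd : 0 < β₂ - β₁) (hβ₁0 : β₁ < 0) (hβ₂0 : 0 < β₂)
    (n : ℕ) :
    drG β β₁ β₂ (n + 1) = drG β β₁ β₂ n + 1 ↔ drA β β₁ β₂ n ≤ β - β₁ := by
  have hle := drG_succ_le (β := β) hd hβ₂0 n
  have key : drG β β₁ β₂ n + 1 ≤ drG β β₁ β₂ (n + 1) ↔ drA β β₁ β₂ n ≤ β - β₁ := by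
    rw [show drG β β₁ β₂ (n+1) = ⌊(β - (((n:ℕ):ℝ) + 1 + 1) * β₁ + β₂) / (β₂ - β₁)⌋ by
      unfold drG; push_cast; ring_nf]
    rw [Int.le_floor]
    push_cast
    rw [le_div_iff₀ hd]
    unfold drA
    constructor <;> intro h <;> nlinarith
  constructor
  · intro h; exact key.mp (le_of_eq h.symm)
  · intro h; have := key.mpr h; omega

private lemma drG_zero {β β₁ β₂ : ℝ} (hd : 0 < β₂ - β₁) (hββ₁ : β < β₁) (hβ₁0 : β₁ < 0)
    (hββ₂ : -β₂ ≤ β) : drG β β₁ β₂ 0 = 0 := by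
  unfold drG
  rw [Int.floor_eq_zero_iff, Set.mem_Ico]
  constructor
  · apply div_nonneg ?_ hd.le
    push_cast; linarith
  · rw [div_lt_one hd]; push_cast; linarith

private lemma drG_one {β β₁ β₂ : ℝ} (hd : 0 < β₂ - β₁) (hββ₁ : β < β₁) (hβ₁0 : β₁ < 0)
    (hββ₂ : -β₂ ≤ β) : drG β β₁ β₂ 1 = 0 := by
  unfold drG
  rw [Int.floor_eq_zero_iff, Set.mem_Ico]
  constructor
  · apply div_nonneg ?_ hd.le
    push_cast; linarith
  · rw [div_lt_one hd]; push_cast; linarith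

private lemma drA_succ₂ {β β₁ β₂ : ℝ} {n : ℕ} (h : drG β β₁ β₂ (n + 1) = drG β β₁ β₂ n + 1) :
    drA β β₁ β₂ (n + 1) = drA β β₁ β₂ n + β₂ := by
  unfold drA; rw [h]; push_cast; ring

private lemma drA_succ₁ {β β₁ β₂ : ℝ} {n : ℕ} (h : drG β β₁ β₂ (n + 1) = drG β β₁ β₂ n) :
    drA β β₁ β₂ (n + 1) = drA β β₁ β₂ n + β₁ := by
  unfold drA; rw [h]; push_cast; ring

set_option maxHeartbeats 1000000 in
/-- For a DR sequence (with the tie convention choosing `b₂`) with respect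
to the hyperplane `A = {u}ᗮ` and `B = {b₁, b₂}`, if `β₁ > β ≥ -β₂`, `x 0 ∈ A` and
`2⟪x 0, b₁ - b₂⟫ > ‖b₁‖² - ‖b₂‖²`, then for all `n`:
`⟪x n, u⟫ = n β₁ + ⌊(β - (n+1)β₁ + β₂)/(β₂ - β₁)⌋ (β₂ - β₁)`, and for all `n ≥ 1`:
`x n = ((n-1)β₁ + ⌊(β - nβ₁ + β₂)/(β₂-β₁)⌋ (β₂-β₁)) • u + b_{k(n)}` with
`k(n) = ⌊(β - (n+1)β₁ + β₂)/(β₂-β₁)⌋ - ⌊(β - nβ₁ + β₂)/(β₂-β₁)⌋ + 1 ∈ {1, 2}`. -/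
theorem dr_hyperplane_doubleton_stmt_16
    {X : Type*} [NormedAddCommGroup X] [InnerProductSpace ℝ X] [FiniteDimensional ℝ X]
    (u : X) (hu : ‖u‖ = 1)
    (b₁ b₂ : X) (hb₁ : ⟪b₁, u⟫ < 0) (hb₂ : 0 < ⟪b₂, u⟫)
    (β₁ β₂ β : ℝ) (hβ₁ : β₁ = ⟪b₁, u⟫) (hβ₂ : β₂ = ⟪b₂, u⟫)
    (hβ : β = -‖b₁ - b₂‖ ^ 2 / (2 * ⟪b₂ - b₁, u⟫))
    (x : ℕ → X)
    (hx : ∀ n : ℕ,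
      (‖(x n - (2 * ⟪x n, u⟫) • u) - b₁‖ < ‖(x n - (2 * ⟪x n, u⟫) • u) - b₂‖ →
        x (n + 1) = ⟪x n, u⟫ • u + b₁) ∧
      (‖(x n - (2 * ⟪x n, u⟫) • u) - b₂‖ ≤ ‖(x n - (2 * ⟪x n, u⟫) • u) - b₁‖ →
        x (n + 1) = ⟪x n, u⟫ • u + b₂))
    (hββ₁ : β < β₁) (hββ₂ : -β₂ ≤ β)
    (hx0 : ⟪x 0, u⟫ = 0)
    (hstart : 2 * ⟪x 0, b₁ - b₂⟫ > ‖b₁‖ ^ 2 - ‖b₂‖ ^ 2) :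
    (∀ n : ℕ, ⟪x n, u⟫ = (n : ℝ) * β₁ +
      (⌊(β - ((n : ℝ) + 1) * β₁ + β₂) / (β₂ - β₁)⌋ : ℝ) * (β₂ - β₁)) ∧
    ∀ n : ℕ, 1 ≤ n →
      ∃ k : ℤ,
        k = ⌊(β - ((n : ℝ) + 1) * β₁ + β₂) / (β₂ - β₁)⌋ -
            ⌊(β - (n : ℝ) * β₁ + β₂) / (β₂ - β₁)⌋ + 1 ∧
        (k = 1 ∨ k = 2) ∧
        x n = (((n : ℝ) - 1) * β₁ +
            (⌊(β - (n : ℝ) * β₁ + β₂) / (β₂ - β₁)⌋ : ℝ) * (β₂ - β₁)) • u +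
          (if k = 1 then b₁ else b₂) := by
  have hβ₁0 : β₁ < 0 := hβ₁ ▸ hb₁
  have hβ₂0 : 0 < β₂ := hβ₂ ▸ hb₂
  have hd : (0:ℝ) < β₂ - β₁ := by linarith
  have huu : ⟪u, u⟫ = 1 := by
    rw [real_inner_self_eq_norm_sq, hu]; norm_num
  have h1u : ⟪u, b₁⟫ = β₁ := by rw [real_inner_comm]; exact hβ₁.symm
  have h2u : ⟪u, b₂⟫ = β₂ := by rw [real_inner_comm]; exact hβ₂.symm
  have hnorm : ‖b₂ - b₁‖ ^ 2 = -2 * β * (β₂ - β₁) := by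
    have h21 : ⟪b₂ - b₁, u⟫ = β₂ - β₁ := by
      rw [inner_sub_left, ← hβ₁, ← hβ₂]
    rw [h21] at hβ
    rw [norm_sub_rev]
    have hd' : β₂ - β₁ ≠ 0 := ne_of_gt hd
    field_simp at hβ
    linarith
  -- expansion of the inner product in the decision criterion
  have hexp : ∀ (c γ : ℝ) (b : X),
      ⟪(c • u + b) - (2 * (c + γ)) • u, b₂ - b₁⟫ =
        (-c - 2*γ) * (β₂ - β₁) + (⟪b, b₂⟫ - ⟪b, b₁⟫) := by
    intro c γ b
    simp only [inner_sub_left, inner_add_left, real_inner_smul_left, inner_sub_right,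
      h1u, h2u]
    ring
  -- comparison of distances
  have D1 : ∀ v : X, ‖b₂‖^2 - ‖b₁‖^2 ≤ 2 * ⟪v, b₂ - b₁⟫ → ‖v - b₂‖ ≤ ‖v - b₁‖ := by
    intro v h
    have hsq : ‖v - b₂‖^2 ≤ ‖v - b₁‖^2 := by
      rw [norm_sub_sq_real, norm_sub_sq_real]
      rw [inner_sub_right] at h
      linarith
    nlinarith [norm_nonneg (v - b₂), norm_nonneg (v - b₁)]
  have D2 : ∀ v : X, 2 * ⟪v, b₂ - b₁⟫ < ‖b₂‖^2 - ‖b₁‖^2 → ‖v - b₁‖ < ‖v - b₂‖ := by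
    intro v h
    have hsq : ‖v - b₁‖^2 < ‖v - b₂‖^2 := by
      rw [norm_sub_sq_real, norm_sub_sq_real]
      rw [inner_sub_right] at h
      linarith
    nlinarith [norm_nonneg (v - b₂), norm_nonneg (v - b₁)]
  -- step 0
  have hs0 : x 1 = b₁ := by
    have hcrit : ‖(x 0 - (2 * ⟪x 0, u⟫) • u) - b₁‖ < ‖(x 0 - (2 * ⟪x 0, u⟫) • u) - b₂‖ := by
      apply D2
      rw [hx0]
      norm_num
      rw [inner_sub_right]
      rw [inner_sub_right] at hstart
      linarith
    have h := (hx 0).1 hcrit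
    rw [hx0] at h
    simpa using h
  have hG0 := drG_zero (β := β) hd hββ₁ hβ₁0 hββ₂
  have hG1 := drG_one (β := β) hd hββ₁ hβ₁0 hββ₂
  -- the main induction
  have key : ∀ n : ℕ, ⟪x (n+1), u⟫ = drA β β₁ β₂ (n+1) ∧
      x (n+1) = (drA β β₁ β₂ n) • u +
        (if drG β β₁ β₂ (n+1) = drG β β₁ β₂ n + 1 then b₂ else b₁) := by
    intro n
    induction n with
    | zero =>
      constructor
      · rw [hs0]
        unfold drA
        rw [hG1, ← hβ₁]
        push_cast
        ring
      · rw [hs0, if_neg (by simp only [Nat.zero_add, hG0, hG1]; omega)]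
        unfold drA
        rw [hG0]
        push_cast
        simp
    | succ m ih =>
      obtain ⟨ihα, ihx⟩ := ih
      by_cases hcase : drG β β₁ β₂ (m+1) = drG β β₁ β₂ m + 1
      · -- x (m+1) carries b₂ : next choice is b₁
        rw [if_pos hcase] at ihx
        have hαv : drA β β₁ β₂ (m+1) = drA β β₁ β₂ m + β₂ := drA_succ₂ hcase
        have hcgt : β < drA β β₁ β₂ m := drA_gt hd m
        have hcrit : ‖(x (m+1) - (2 * ⟪x (m+1), u⟫) • u) - b₁‖ <
            ‖(x (m+1) - (2 * ⟪x (m+1), u⟫) • u) - b₂‖ := by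
          apply D2
          rw [ihα, hαv, ihx, hexp]
          have hmul : (-(drA β β₁ β₂ m) - 2*β₂) * (β₂ - β₁) < β * (β₂ - β₁) := by
            apply mul_lt_mul_of_pos_right ?_ hd
            linarith
          have he2 := norm_sub_sq_real b₂ b₁
          have hs2 := real_inner_self_eq_norm_sq b₂
          linarith [hmul, he2, hs2, hnorm]
        have hstep := (hx (m+1)).1 hcrit
        have hg2 : drG β β₁ β₂ (m+1+1) = drG β β₁ β₂ (m+1) := by
          have hiff := drG_succ_iff (β := β) hd hβ₁0 hβ₂0 (m+1)
          have h1 := drG_succ_le (β := β) hd hβ₂0 (m+1)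
          have h2 := drG_mono (β := β) hd hβ₁0 (m+1)
          have hne : ¬ (drG β β₁ β₂ (m+1+1) = drG β β₁ β₂ (m+1) + 1) := by
            intro hh
            have := hiff.mp hh
            rw [hαv] at this
            linarith
          omega
        constructor
        · rw [hstep]
          simp only [inner_add_left, real_inner_smul_left, huu, mul_one]
          rw [ihα, ← hβ₁, drA_succ₁ hg2]
        · rw [if_neg (by omega), hstep, ihα]
      · -- x (m+1) carries b₁
        rw [if_neg hcase] at ihx
        have hgeq : drG β β₁ β₂ (m+1) = drG β β₁ β₂ m := by
          have h1 := drG_succ_le (β := β) hd hβ₂0 m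
          have h2 := drG_mono (β := β) hd hβ₁0 m
          omega
        have hαv : drA β β₁ β₂ (m+1) = drA β β₁ β₂ m + β₁ := drA_succ₁ hgeq
        have he2 := norm_sub_sq_real b₂ b₁
        have hs1 := real_inner_self_eq_norm_sq b₁
        have hcm : (⟪b₁, b₂⟫ : ℝ) = ⟪b₂, b₁⟫ := real_inner_comm b₂ b₁
        by_cases hch : drA β β₁ β₂ (m+1) ≤ β - β₁
        · -- next choice is b₂
          have hcrit : ‖(x (m+1) - (2 * ⟪x (m+1), u⟫) • u) - b₂‖ ≤
              ‖(x (m+1) - (2 * ⟪x (m+1), u⟫) • u) - b₁‖ := by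
            apply D1
            rw [ihα, hαv, ihx, hexp]
            have hmul : (-β) * (β₂ - β₁) ≤ (-(drA β β₁ β₂ m) - 2*β₁) * (β₂ - β₁) := by
              apply mul_le_mul_of_nonneg_right ?_ hd.le
              linarith
            linarith [hmul, he2, hs1, hnorm, hcm]
          have hstep := (hx (m+1)).2 hcrit
          have hg2 : drG β β₁ β₂ (m+1+1) = drG β β₁ β₂ (m+1) + 1 :=
            (drG_succ_iff (β := β) hd hβ₁0 hβ₂0 (m+1)).mpr hch
          constructor
          · rw [hstep]
            simp only [inner_add_left, real_inner_smul_left, huu, mul_one]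
            rw [ihα, ← hβ₂, drA_succ₂ hg2]
          · rw [if_pos hg2, hstep, ihα]
        · -- next choice is b₁
          push_neg at hch
          have hcrit : ‖(x (m+1) - (2 * ⟪x (m+1), u⟫) • u) - b₁‖ <
              ‖(x (m+1) - (2 * ⟪x (m+1), u⟫) • u) - b₂‖ := by
            apply D2
            rw [ihα, hαv, ihx, hexp]
            have hmul : (-(drA β β₁ β₂ m) - 2*β₁) * (β₂ - β₁) < (-β) * (β₂ - β₁) := by
              apply mul_lt_mul_of_pos_right ?_ hd
              linarith
            linarith [hmul, he2, hs1, hnorm, hcm]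
          have hstep := (hx (m+1)).1 hcrit
          have hg2 : drG β β₁ β₂ (m+1+1) = drG β β₁ β₂ (m+1) := by
            have hiff := drG_succ_iff (β := β) hd hβ₁0 hβ₂0 (m+1)
            have h1 := drG_succ_le (β := β) hd hβ₂0 (m+1)
            have h2 := drG_mono (β := β) hd hβ₁0 (m+1)
            have hne : ¬ (drG β β₁ β₂ (m+1+1) = drG β β₁ β₂ (m+1) + 1) := by
              intro hh
              have := hiff.mp hh
              linarith
            omega
          constructor
          · rw [hstep]
            simp only [inner_add_left, real_inner_smul_left, huu, mul_one]
            rw [ihα, ← hβ₁, drA_succ₁ hg2]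
          · rw [if_neg (by omega), hstep, ihα]
  constructor
  · intro n
    cases n with
    | zero =>
      rw [hx0]
      have : (⌊(β - (((0:ℕ) : ℝ) + 1) * β₁ + β₂) / (β₂ - β₁)⌋ : ℤ) = 0 := hG0
      rw [this]
      norm_num
    | succ m => exact (key m).1
  · intro n hn
    obtain ⟨m, rfl⟩ : ∃ m, n = m + 1 := ⟨n - 1, by omega⟩
    have hG1' : drG β β₁ β₂ (m+1) = ⌊(β - (((m+1:ℕ) : ℝ) + 1) * β₁ + β₂) / (β₂ - β₁)⌋ := rfl
    have hG0' : drG β β₁ β₂ m = ⌊(β - ((m+1:ℕ) : ℝ) * β₁ + β₂) / (β₂ - β₁)⌋ := by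
      unfold drG; push_cast; ring_nf
    refine ⟨drG β β₁ β₂ (m+1) - drG β β₁ β₂ m + 1, by rw [← hG1', ← hG0'], ?_, ?_⟩
    · have h1 := drG_succ_le (β := β) hd hβ₂0 m
      have h2 := drG_mono (β := β) hd hβ₁0 m
      omega
    · have hcoef : (((m+1:ℕ) : ℝ) - 1) * β₁ +
          ((drG β β₁ β₂ m : ℤ) : ℝ) * (β₂ - β₁) = drA β β₁ β₂ m := by
        unfold drA; push_cast; ring
      rw [← hG0', hcoef]
      have hx' := (key m).2
      by_cases hcase : drG β β₁ β₂ (m+1) = drG β β₁ β₂ m + 1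
      · rw [if_pos hcase] at hx'
        rw [if_neg (by omega)]
        exact hx'
      · rw [if_neg hcase] at hx'
        rw [if_pos (by
          have h1 := drG_succ_le (β := β) hd hβ₂0 m
          have h2 := drG_mono (β := β) hd hβ₁0 m
          omega)]
        exact hx'
end

section
/- Let X = ℝ² with the Euclidean inner product, A = ℝ × {0}, and B = {b_1, b_2} with b_1 = (0, −1) and b_2 = (1, r), where r ∈ ℝ, r ≥ √2. Let (x_n) be a DR sequence (with the tie convention) with respect to (A, B) with starting point x_0 = (α, 0), where α ∈ ℝ and α < r²/2. Then for all n ≥ 1: x_n = ( ⌊n/(r+1) + (r²+2r)/(2(r+1)²)⌋ − ⌊(n−1)/(r+1) + (r²+2r)/(2(r+1)²)⌋ , −n + ⌊n/(r+1) + (r²+2r)/(2(r+1)²)⌋·(r+1) ). -/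
/-!
Write a point as `(ξ, η)`. Then `R_A x` is strictly closer to `b₁` than to `b₂` exactly when
`ξ - η (r + 1) < r² / 2`, and the DR step moves to `(0, η - 1)` in that case and to `(1, η + r)`
otherwise. With `k s = ⌊s / (r + 1) + (r² + 2r) / (2 (r + 1)²)⌋`, the curve
`s ↦ (k s - k (s - 1), -s + k s (r + 1))` is mapped to itself by this step, shifted by one, for
every real `s`: `k` jumps between `s` and `s + 1` exactly when `s (r + 1) - k s (r + 1)² ≥ r² / 2`,
and if it jumped between `s - 1` and `s`, that quantity is below `1 - r² / 2 ≤ r² / 2`, which is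
where `r² ≥ 2` enters. The orbit of `(α, 0)` reaches the curve at `s = 1` after one `b₁`-step.
-/

noncomputable def drCount (r s : ℝ) : ℤ :=
  ⌊s / (r + 1) + (r ^ 2 + 2 * r) / (2 * (r + 1) ^ 2)⌋

section drCount

variable {r : ℝ}

theorem le_drCount_iff (hr : 0 < r + 1) {s : ℝ} {z : ℤ} :
    z ≤ drCount r s ↔ z * (r + 1) ^ 2 ≤ s * (r + 1) + r ^ 2 / 2 + r := by
  have hsum : s / (r + 1) + (r ^ 2 + 2 * r) / (2 * (r + 1) ^ 2)
      = (s * (r + 1) + r ^ 2 / 2 + r) / (r + 1) ^ 2 := by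
    field_simp
    ring
  rw [drCount, Int.le_floor, hsum, le_div_iff₀ (by positivity)]

theorem drCount_lt_iff (hr : 0 < r + 1) {s : ℝ} {z : ℤ} :
    drCount r s < z ↔ s * (r + 1) + r ^ 2 / 2 + r < z * (r + 1) ^ 2 := by
  rw [← not_le, le_drCount_iff hr, not_le]

theorem drCount_zero (hr : 0 ≤ r) : drCount r 0 = 0 := by
  apply le_antisymm
  · rw [← Int.lt_add_one_iff, drCount_lt_iff (by linarith)]
    push_cast
    nlinarith
  · rw [le_drCount_iff (by linarith)]
    push_cast
    nlinarith

theorem drCount_one (hr : 0 < r) : drCount r 1 = 0 := by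
  apply le_antisymm
  · rw [← Int.lt_add_one_iff, drCount_lt_iff (by linarith)]
    push_cast
    nlinarith
  · rw [le_drCount_iff (by linarith)]
    push_cast
    nlinarith

theorem drCount_monotone (hr : 0 < r + 1) : Monotone (drCount r) := fun s s' h =>
  Int.floor_mono (by gcongr)

theorem drCount_add_one_le (hr : 0 ≤ r) (s : ℝ) : drCount r (s + 1) ≤ drCount r s + 1 := by
  rw [← Int.lt_add_one_iff, drCount_lt_iff (by linarith)]
  have h := (drCount_lt_iff (by linarith)).1 (lt_add_one (drCount r s))
  push_cast at h ⊢
  nlinarith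

theorem le_drCount_add_one_iff (hr : 0 < r + 1) (s : ℝ) :
    drCount r s + 1 ≤ drCount r (s + 1) ↔
      r ^ 2 / 2 ≤ s * (r + 1) - drCount r s * (r + 1) ^ 2 := by
  rw [le_drCount_iff hr]
  push_cast
  constructor <;> intro h <;> linarith

theorem sub_drCount_sub_one_lt (hr : 0 < r + 1) (s : ℝ) :
    s * (r + 1) - (drCount r (s - 1) + 1) * (r + 1) ^ 2 < 1 - r ^ 2 / 2 := by
  have h := (drCount_lt_iff hr).1 (lt_add_one (drCount r (s - 1)))
  push_cast at h
  linarith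

end drCount

noncomputable def drOrbit (r s : ℝ) : ℝ × ℝ :=
  ((drCount r s : ℝ) - drCount r (s - 1), -s + drCount r s * (r + 1))

noncomputable def drNext (r : ℝ) (p : ℝ × ℝ) : ℝ × ℝ :=
  if p.1 - p.2 * (r + 1) < r ^ 2 / 2 then (0, p.2 - 1) else (1, p.2 + r)

theorem drNext_of_lt {r : ℝ} {p : ℝ × ℝ} (h : p.1 - p.2 * (r + 1) < r ^ 2 / 2) :
    drNext r p = (0, p.2 - 1) :=
  if_pos h

theorem drNext_of_le {r : ℝ} {p : ℝ × ℝ} (h : r ^ 2 / 2 ≤ p.1 - p.2 * (r + 1)) :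
    drNext r p = (1, p.2 + r) :=
  if_neg h.not_gt

theorem drNext_drOrbit {r : ℝ} (hr : 0 < r) (hr2 : 2 ≤ r ^ 2) (s : ℝ) :
    drNext r (drOrbit r s) = drOrbit r (s + 1) := by
  have ht : 0 < r + 1 := by linarith
  have hprev_le : drCount r (s - 1) ≤ drCount r s := drCount_monotone ht (by linarith)
  have hle_prev : drCount r s ≤ drCount r (s - 1) + 1 := by
    simpa using drCount_add_one_le hr.le (s - 1)
  have hle_next : drCount r s ≤ drCount r (s + 1) := drCount_monotone ht (by linarith)
  have hnext_le : drCount r (s + 1) ≤ drCount r s + 1 := drCount_add_one_le hr.le s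
  have hpot := le_drCount_add_one_iff ht s
  simp only [drOrbit, add_sub_cancel_right]
  by_cases hjump : drCount r s + 1 ≤ drCount r (s + 1)
  · have hnext : drCount r (s + 1) = drCount r s + 1 := by omega
    have hδ : (0 : ℝ) ≤ drCount r s - drCount r (s - 1) := by
      rw [sub_nonneg]; exact_mod_cast hprev_le
    rw [drNext_of_le (by simp only; linarith [hpot.1 hjump]), hnext]
    ext <;> push_cast <;> ring
  · have hnext : drCount r (s + 1) = drCount r s := by omega
    have hcrit : ((drCount r s : ℝ) - drCount r (s - 1)) + s * (r + 1)
        - drCount r s * (r + 1) ^ 2 < r ^ 2 / 2 := by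
      rcases (by omega : drCount r s = drCount r (s - 1) ∨ drCount r s = drCount r (s - 1) + 1)
        with hsame | hstep
      · rw [hsame, sub_self, zero_add, ← hsame]
        exact not_le.1 (mt hpot.2 hjump)
      · have h := sub_drCount_sub_one_lt ht s
        have hcast : (drCount r s : ℝ) = drCount r (s - 1) + 1 := by exact_mod_cast hstep
        rw [hcast]
        linarith
    rw [drNext_of_lt (by simp only; linarith), hnext]
    ext <;> push_cast <;> ring

theorem norm_sub_lt_norm_sub_iff {r : ℝ} {u b₁ b₂ : EuclideanSpace ℝ (Fin 2)}
    (hb₁ : b₁ 0 = 0 ∧ b₁ 1 = -1) (hb₂ : b₂ 0 = 1 ∧ b₂ 1 = r) :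
    ‖u - b₁‖ < ‖u - b₂‖ ↔ u 0 + u 1 * (r + 1) < r ^ 2 / 2 := by
  rw [← sq_lt_sq₀ (norm_nonneg _) (norm_nonneg _), EuclideanSpace.real_norm_sq_eq,
    EuclideanSpace.real_norm_sq_eq]
  simp only [Fin.sum_univ_two, PiLp.sub_apply, hb₁.1, hb₁.2, hb₂.1, hb₂.2]
  constructor <;> intro h <;> linarith

theorem dr_step_eq_drNext {r : ℝ} {b₁ b₂ v w : EuclideanSpace ℝ (Fin 2)}
    {P R : EuclideanSpace ℝ (Fin 2) → EuclideanSpace ℝ (Fin 2)}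
    (hb₁ : b₁ 0 = 0 ∧ b₁ 1 = -1) (hb₂ : b₂ 0 = 1 ∧ b₂ 1 = r)
    (hPv : P v 0 = v 0 ∧ P v 1 = 0) (hRv : R v 0 = v 0 ∧ R v 1 = -(v 1))
    (hw : (‖R v - b₁‖ < ‖R v - b₂‖ → w = v - P v + b₁) ∧
      (‖R v - b₂‖ ≤ ‖R v - b₁‖ → w = v - P v + b₂)) :
    (w 0, w 1) = drNext r (v 0, v 1) := by
  have hcrit := norm_sub_lt_norm_sub_iff (u := R v) hb₁ hb₂
  rw [hRv.1, hRv.2, neg_mul, ← sub_eq_add_neg] at hcrit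
  by_cases h : v 0 - v 1 * (r + 1) < r ^ 2 / 2
  · rw [drNext_of_lt h, hw.1 (hcrit.2 h)]
    simp [hPv.1, hPv.2, hb₁.1, hb₁.2, sub_eq_add_neg]
  · rw [drNext_of_le (not_lt.1 h), hw.2 (not_lt.1 (mt hcrit.1 h))]
    simp [hPv.1, hPv.2, hb₂.1, hb₂.2]

/-- In `X = ℝ²` (Euclidean) with `A = ℝ × {0}`, `b₁ = (0, -1)`,
`b₂ = (1, r)`, `r ≥ √2`, the DR sequence (with the tie convention choosing `b₂`) started
at `x 0 = (α, 0)` with `α < r²/2` satisfies, for all `n ≥ 1`,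
`x n = (⌊n/(r+1) + (r²+2r)/(2(r+1)²)⌋ - ⌊(n-1)/(r+1) + (r²+2r)/(2(r+1)²)⌋,
 -n + ⌊n/(r+1) + (r²+2r)/(2(r+1)²)⌋ (r+1))`.
Here `P_A (a, b) = (a, 0)` and `R_A (a, b) = (a, -b)`. -/
theorem dr_hyperplane_doubleton_stmt_18
    (r α : ℝ) (hr : Real.sqrt 2 ≤ r) (hα : α < r ^ 2 / 2)
    (b₁ b₂ : EuclideanSpace ℝ (Fin 2))
    (hb₁ : b₁ 0 = 0 ∧ b₁ 1 = -1) (hb₂ : b₂ 0 = 1 ∧ b₂ 1 = r)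
    (P R : EuclideanSpace ℝ (Fin 2) → EuclideanSpace ℝ (Fin 2))
    (hP : ∀ v : EuclideanSpace ℝ (Fin 2), P v 0 = v 0 ∧ P v 1 = 0)
    (hR : ∀ v : EuclideanSpace ℝ (Fin 2), R v 0 = v 0 ∧ R v 1 = -(v 1))
    (x : ℕ → EuclideanSpace ℝ (Fin 2))
    (hx0 : x 0 0 = α ∧ x 0 1 = 0)
    (hx : ∀ n : ℕ,
      (‖R (x n) - b₁‖ < ‖R (x n) - b₂‖ → x (n + 1) = x n - P (x n) + b₁) ∧
      (‖R (x n) - b₂‖ ≤ ‖R (x n) - b₁‖ → x (n + 1) = x n - P (x n) + b₂)) :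
    ∀ n : ℕ, 1 ≤ n →
      x n 0 =
        (⌊(n : ℝ) / (r + 1) + (r ^ 2 + 2 * r) / (2 * (r + 1) ^ 2)⌋ : ℝ) -
        (⌊((n : ℝ) - 1) / (r + 1) + (r ^ 2 + 2 * r) / (2 * (r + 1) ^ 2)⌋ : ℝ) ∧
      x n 1 =
        -(n : ℝ) +
        (⌊(n : ℝ) / (r + 1) + (r ^ 2 + 2 * r) / (2 * (r + 1) ^ 2)⌋ : ℝ) * (r + 1) := by
  have hr0 : 0 < r := (Real.sqrt_pos.2 two_pos).trans_le hr
  have hr2 : 2 ≤ r ^ 2 := by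
    simpa using pow_le_pow_left₀ (Real.sqrt_nonneg 2) hr 2
  have hstep (n : ℕ) : (x (n + 1) 0, x (n + 1) 1) = drNext r (x n 0, x n 1) :=
    dr_step_eq_drNext hb₁ hb₂ (hP _) (hR _) (hx n)
  have horbit (n : ℕ) (hn : 1 ≤ n) : (x n 0, x n 1) = drOrbit r n := by
    induction n, hn using Nat.le_induction with
    | base =>
      rw [hstep, hx0.1, hx0.2, drNext_of_lt (by simpa using hα)]
      simp [drOrbit, drCount_zero hr0.le, drCount_one hr0]
    | succ n _ ih =>
      rw [hstep, ih, drNext_drOrbit hr0 hr2]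
      push_cast
      rfl
  intro n hn
  simpa [drOrbit, drCount, Prod.ext_iff] using horbit n hn
end
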